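/- arXiv:1209.3957 — 7 statements merged into one kernel-verified Lean document; each statement's English description precedes it below -/
import Mathlib

section
/- Let 0<α<2 and 0<β<1, and let M_β be the Mittag-Leffler process (the inverse of a β-stable subordinator) on a probability space (Ω',F',P'). Then for every c>0, every k≥1, all t_1,…,t_k≥0 and all real θ_1,…,θ_k, one has ∫_0^∞ E'| Σ_{j=1}^k θ_j M_β((c t_j − x)_+) |^α (1−β) x^{−β} dx = c^{αH} ∫_0^∞ E'| Σ_{j=1}^k θ_j M_β((t_j − x)_+) |^α (1−β) x^{−β} dx, where H = β + (1−β)/α. (This identity expresses that the β-Mittag-Leffler fractional SαS motion is self-similar with exponent H.) -/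
/-!
For `c > 0` the rescaled path `u ↦ c⁻¹ S (c ^ β u)` is again a `β`-stable subordinator, as its
Laplace transform shows. The finite-dimensional laws of a `β`-stable subordinator are determined
by the independence of its increments and their Laplace transforms (these are the moments of
`e^{-X}` on `[0, 1]`, and Weierstrass approximation applies), and those of its inverse `M` are
determined through `{M s ≤ u} = {s ≤ S u}`, which holds a.s. Inverting the rescaling gives
`M (c ·) = c ^ β M (·)` in law, so the inner expectation scales by `c ^ (α β)`; substituting
`x = c y` in the outer integral contributes `c · c ^ (-β)`, and
`c · c ^ (α β) · c ^ (-β) = c ^ (α H)`.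
-/

open MeasureTheory ProbabilityTheory Filter
open scoped ENNReal

/-- The (generalized right-continuous) inverse of the path `S ω`, i.e. the
Mittag-Leffler process when `S` is a `β`-stable subordinator. -/
noncomputable def invProc {Ω : Type*} (S : Ω → ℝ → ℝ) (ω : Ω) (t : ℝ) : ℝ :=
  sInf {u : ℝ | 0 ≤ u ∧ t ≤ S ω u}

/-- `S` is a `β`-stable subordinator on the probability space `(Ω, P)`:
it starts at `0`, has nondecreasing right-continuous sample paths, independent
increments, and Laplace transform `E[exp (-θ (S u - S v))] = exp (-(u-v) θ^β)`. -/
structure IsStableSubordinator {Ω : Type*} [MeasurableSpace Ω] (β : ℝ) (P : Measure Ω)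
    (S : Ω → ℝ → ℝ) : Prop where
  zero : ∀ ω, S ω 0 = 0
  mono : ∀ ω, Monotone (S ω)
  rightCont : ∀ ω, ∀ u : ℝ, ContinuousWithinAt (S ω) (Set.Ici u) u
  meas : ∀ u : ℝ, Measurable fun ω => S ω u
  indep : ∀ (n : ℕ) (t : Fin (n + 1) → ℝ), Monotone t → 0 ≤ t 0 →
    iIndepFun
      (fun i : Fin n => fun ω => S ω (t i.succ) - S ω (t i.castSucc)) P
  laplace : ∀ θ : ℝ, 0 ≤ θ → ∀ v u : ℝ, 0 ≤ v → v ≤ u →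
    ∫ ω, Real.exp (-θ * (S ω u - S ω v)) ∂P = Real.exp (-(u - v) * θ ^ β)

open Set
open scoped Pointwise unitInterval

lemma MeasureTheory.Measure.ext_of_integral_pow_eq {μ ν : Measure I} [IsFiniteMeasure μ]
    [IsFiniteMeasure ν] (h : ∀ n : ℕ, ∫ x, (x : ℝ) ^ n ∂μ = ∫ x, (x : ℝ) ^ n ∂ν) : μ = ν := by
  have hcont : ∀ (m : Measure I) [IsFiniteMeasure m],
      Continuous fun f : C(I, ℝ) => ∫ x, f x ∂m := fun m _ => by
      have : (fun f : C(I, ℝ) => ∫ x, f x ∂m)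
          = fun f => ∫ x, ContinuousMap.toLp (E := ℝ) 1 m ℝ f x ∂m :=
        funext fun f => integral_congr_ae (ContinuousMap.coeFn_toLp m f).symm
      rw [this]
      exact continuous_integral.comp (ContinuousMap.toLp 1 m ℝ).continuous
  have hpoly : (polynomialFunctions I : Set C(I, ℝ)) ⊆ {f | ∫ x, f x ∂μ = ∫ x, f x ∂ν} := by
    rintro _ ⟨p, -, rfl⟩
    change ∫ x, p.eval (x : ℝ) ∂μ = ∫ x, p.eval (x : ℝ) ∂ν
    simp only [Polynomial.eval_eq_sum_range]
    rw [integral_finsetSum, integral_finsetSum]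
    · simp_rw [integral_const_mul, h]
    all_goals
      exact fun i _ => Continuous.integrable_of_hasCompactSupport (by fun_prop)
        (HasCompactSupport.of_compactSpace _)
  have hall : ∀ f : C(I, ℝ), ∫ x, f x ∂μ = ∫ x, f x ∂ν := by
    intro f
    have hcl := closure_minimal hpoly (isClosed_eq (hcont μ) (hcont ν))
    rw [← Subalgebra.topologicalClosure_coe, polynomialFunctions_closure_eq_top'] at hcl
    exact hcl (mem_univ f)
  exact ext_of_forall_integral_eq_of_IsFiniteMeasure fun f => hall f.toContinuousMap

lemma map_eq_map_of_integral_exp_neg_mul_eq {Ω : Type*} [MeasurableSpace Ω] {P : Measure Ω}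
    [IsFiniteMeasure P] {X Y : Ω → ℝ} (hX : Measurable X) (hY : Measurable Y)
    (hX0 : ∀ ω, 0 ≤ X ω) (hY0 : ∀ ω, 0 ≤ Y ω)
    (h : ∀ n : ℕ, ∫ ω, Real.exp (-n * X ω) ∂P = ∫ ω, Real.exp (-n * Y ω) ∂P) :
    P.map X = P.map Y := by
  have hI : ∀ {Z : Ω → ℝ}, (∀ ω, 0 ≤ Z ω) → ∀ ω, Real.exp (-Z ω) ∈ I :=
    fun hZ ω => ⟨(Real.exp_pos _).le, Real.exp_le_one_iff.mpr (neg_nonpos.mpr (hZ ω))⟩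
  have hmap : ∀ {Z : Ω → ℝ} (hZ : Measurable Z) (hZ0 : ∀ ω, 0 ≤ Z ω), P.map Z
      = (P.map fun ω => (⟨Real.exp (-Z ω), hI hZ0 ω⟩ : I)).map fun x : I => -Real.log x := by
    intro Z hZ hZ0
    rw [Measure.map_map (by fun_prop) (by fun_prop)]
    congr 1
    funext ω
    simp
  rw [hmap hX hX0, hmap hY hY0]
  congr 1
  refine Measure.ext_of_integral_pow_eq fun n => ?_
  rw [integral_map (by fun_prop) (by fun_prop), integral_map (by fun_prop) (by fun_prop)]
  simpa [← Real.exp_nat_mul] using h n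

lemma MeasureTheory.Measure.ext_of_pi_Iic {ι : Type*} [Fintype ι] {μ ν : Measure (ι → ℝ)}
    [IsProbabilityMeasure μ] [IsProbabilityMeasure ν]
    (h : ∀ u : ι → ℝ, μ (pi univ fun j => Iic (u j)) = ν (pi univ fun j => Iic (u j))) :
    μ = ν := by
  have hgen : (MeasurableSpace.pi : MeasurableSpace (ι → ℝ))
      = .generateFrom (pi univ '' pi univ fun _ => range Iic) := by
    refine (generateFrom_eq_pi (fun _ => (borel_eq_generateFrom_Iic ℝ).symm) fun _ => ?_).symm
    exact ⟨fun n : ℕ => Iic (n : ℝ), fun n => mem_range_self _,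
      iUnion_eq_univ_iff.mpr fun x => (exists_nat_ge x).imp fun _ => mem_Iic.mpr⟩
  refine ext_of_generate_finite _ hgen (IsPiSystem.pi fun _ => isPiSystem_Iic) ?_ (by simp)
  rintro _ ⟨s, hs, rfl⟩
  choose u hu using fun j => hs j (mem_univ j)
  simpa only [← funext hu] using h u

lemma measurable_partialSum {n : ℕ} :
    Measurable (Fin.partialSum : (Fin n → ℝ) → Fin (n + 1) → ℝ) := by
  refine measurable_pi_lambda _ fun i => ?_
  induction i using Fin.induction with
  | zero => simp only [Fin.partialSum_zero]; exact measurable_const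
  | succ i ih => simp only [Fin.partialSum_succ]; exact ih.add (measurable_pi_apply i)

lemma setLIntegral_Ioi_zero_eq_ofReal_mul_comp_mul_left (g : ℝ → ℝ≥0∞) {c : ℝ}
    (hc : 0 < c) : ∫⁻ x in Ioi 0, g x = ENNReal.ofReal c * ∫⁻ y in Ioi 0, g (c * y) := by
  have he := measurableEmbedding_mulLeft₀ hc.ne'
  have hcomp : ∫⁻ y in Ioi 0, g (c * y) = ENNReal.ofReal c⁻¹ * ∫⁻ x in Ioi 0, g x := by
    have hpre : (c * ·) ⁻¹' Ioi 0 = Ioi (0 : ℝ) := by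
      rw [preimage_const_mul_Ioi₀ 0 hc, zero_div]
    conv_lhs => rw [← hpre]
    rw [← he.lintegral_map, ← he.restrict_map,
      Real.map_volume_mul_left hc.ne', Measure.restrict_smul, lintegral_smul_measure,
      abs_of_pos (inv_pos.mpr hc), smul_eq_mul]
  rw [hcomp, ← mul_assoc, ← ENNReal.ofReal_mul hc.le, mul_inv_cancel₀ hc.ne',
    ENNReal.ofReal_one, one_mul]

section Pathwise

variable {Ω : Type*} {S : Ω → ℝ → ℝ} {ω : Ω} {s u : ℝ}

lemma invProc_nonneg (S : Ω → ℝ → ℝ) (ω : Ω) (s : ℝ) : 0 ≤ invProc S ω s :=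
  Real.sInf_nonneg fun _ hx => hx.1

lemma invProc_le_iff (hmono : Monotone (S ω)) (hrc : ContinuousWithinAt (S ω) (Ici u) u)
    (hu : 0 ≤ u) : invProc S ω s ≤ u ↔ (∀ n : ℕ, S ω n < s) ∨ s ≤ S ω u := by
  by_cases hbdd : ∀ n : ℕ, S ω n < s
  · have hempty : {v : ℝ | 0 ≤ v ∧ s ≤ S ω v} = ∅ := by
      refine eq_empty_of_forall_notMem fun v hv => ?_
      obtain ⟨n, hn⟩ := exists_nat_ge v
      exact (hbdd n).not_ge (hv.2.trans (hmono hn))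
    simp [invProc, hempty, hu, hbdd]
  obtain ⟨n, hn⟩ := not_forall_not.mp (by simpa using hbdd)
  simp only [hbdd, false_or]
  have hbelow : BddBelow {v : ℝ | 0 ≤ v ∧ s ≤ S ω v} := ⟨0, fun v hv => hv.1⟩
  refine ⟨fun h => ?_, fun h => csInf_le hbelow ⟨hu, h⟩⟩
  -- every `w > u` lies above some point of the set, and `S ω` is right-continuous at `u`
  have habove : ∀ w, u < w → s ≤ S ω w := fun w hw => by
    obtain ⟨v, hv, hvw⟩ := (csInf_lt_iff hbelow ⟨n, n.cast_nonneg, hn⟩).mp (h.trans_lt hw)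
    exact hv.2.trans (hmono hvw.le)
  exact ge_of_tendsto (hrc.mono Ioi_subset_Ici_self) (eventually_mem_nhdsWithin.mono habove)

lemma invProc_comp_mul {c r : ℝ} (hc : 0 < c) (hr : 0 < r) (m : ℝ) :
    invProc (fun ω u => c⁻¹ * S ω (r * u)) ω m = r⁻¹ * invProc S ω (c * m) := by
  have hset : {u : ℝ | 0 ≤ u ∧ m ≤ c⁻¹ * S ω (r * u)}
      = r⁻¹ • {w : ℝ | 0 ≤ w ∧ c * m ≤ S ω w} := by
    ext u
    simp only [mem_smul_set, mem_ofPred_eq, smul_eq_mul, le_inv_mul_iff₀ hc]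
    constructor
    · rintro ⟨hu0, hmu⟩
      exact ⟨r * u, ⟨by positivity, hmu⟩, by field_simp⟩
    · rintro ⟨w, ⟨hw0, hcm⟩, rfl⟩
      refine ⟨by positivity, ?_⟩
      rwa [mul_inv_cancel_left₀ hr.ne']
  rw [invProc, hset, Real.sInf_smul_of_nonneg (inv_nonneg.mpr hr.le), invProc, smul_eq_mul]

end Pathwise

namespace IsStableSubordinator

variable {Ω : Type*} [MeasurableSpace Ω] {P : Measure Ω} {β : ℝ} {S S' : Ω → ℝ → ℝ}

lemma measurable_invProc (hS : IsStableSubordinator β P S) (s : ℝ) :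
    Measurable fun ω => invProc S ω s := by
  refine measurable_of_Iic fun u => ?_
  rcases lt_or_ge u 0 with hu | hu
  · convert MeasurableSet.empty
    exact eq_empty_of_forall_notMem fun ω hω => hu.not_ge ((invProc_nonneg S ω s).trans hω)
  · have : (fun ω => invProc S ω s) ⁻¹' Iic u = {ω | ∀ n : ℕ, S ω n < s} ∪ {ω | s ≤ S ω u} :=
      ext fun ω => invProc_le_iff (hS.mono ω) (hS.rightCont ω u) hu
    rw [this, ofPred_forall]
    exact (MeasurableSet.iInter fun n : ℕ => measurableSet_lt (hS.meas n) measurable_const).union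
      (measurableSet_le measurable_const (hS.meas u))

lemma measure_forall_lt_eq_zero [IsProbabilityMeasure P] (hS : IsStableSubordinator β P S)
    (s : ℝ) : P {ω | ∀ n : ℕ, S ω n < s} = 0 := by
  have hS0 : ∀ n : ℕ, ∀ ω, 0 ≤ S ω n := fun n ω => hS.zero ω ▸ hS.mono ω n.cast_nonneg
  -- Chernoff: `P (S n ≤ s) ≤ e^s E[e^{-S n}] = e^{s - n}`
  have hbound : ∀ n : ℕ, P.real {ω | ∀ m : ℕ, S ω m < s} ≤ Real.exp s * Real.exp (-n) := by
    intro n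
    have hint : Integrable (fun ω => Real.exp (1 * -S ω n)) P :=
      .of_bound ((hS.meas n).neg.const_mul 1).exp.aestronglyMeasurable 1
        (ae_of_all _ fun ω => by simpa [abs_of_pos (Real.exp_pos _)] using hS0 n ω)
    calc P.real {ω | ∀ m : ℕ, S ω m < s} ≤ P.real {ω | -s ≤ -S ω n} :=
          measureReal_mono fun ω hω => neg_le_neg (hω n).le
      _ ≤ Real.exp (-1 * -s) * mgf (fun ω => -S ω n) P 1 :=
          measure_ge_le_exp_mul_mgf (-s) zero_le_one hint
      _ = Real.exp s * Real.exp (-n) := by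
          have := hS.laplace 1 zero_le_one 0 n le_rfl n.cast_nonneg
          simp_all [mgf, hS.zero]
  have hlim : Tendsto (fun n : ℕ => Real.exp s * Real.exp (-n)) atTop (nhds 0) := by
    simpa using (Real.tendsto_exp_neg_atTop_nhds_zero.comp
      tendsto_natCast_atTop_atTop).const_mul (Real.exp s)
  exact (measureReal_eq_zero_iff).mp
    (le_antisymm (ge_of_tendsto' hlim hbound) measureReal_nonneg)

lemma map_sub_eq [IsFiniteMeasure P] (hS : IsStableSubordinator β P S)
    (hS' : IsStableSubordinator β P S') {v u : ℝ} (hv : 0 ≤ v) (hvu : v ≤ u) :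
    P.map (fun ω => S ω u - S ω v) = P.map (fun ω => S' ω u - S' ω v) :=
  map_eq_map_of_integral_exp_neg_mul_eq ((hS.meas u).sub (hS.meas v))
    ((hS'.meas u).sub (hS'.meas v)) (fun ω => sub_nonneg.mpr (hS.mono ω hvu))
    (fun ω => sub_nonneg.mpr (hS'.mono ω hvu)) fun n => by
      rw [hS.laplace n n.cast_nonneg v u hv hvu, hS'.laplace n n.cast_nonneg v u hv hvu]

lemma map_eq_pi_map_partialSum [IsProbabilityMeasure P] (hS : IsStableSubordinator β P S)
    {n : ℕ} {v : Fin (n + 1) → ℝ} (hv : Monotone v) (hv0 : v 0 = 0) :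
    P.map (fun ω i => S ω (v i))
      = (Measure.pi fun l : Fin n => P.map fun ω => S ω (v l.succ) - S ω (v l.castSucc)).map
          Fin.partialSum := by
  have hm : ∀ l : Fin n, Measurable fun ω => S ω (v l.succ) - S ω (v l.castSucc) :=
    fun l => (hS.meas _).sub (hS.meas _)
  rw [← (hS.indep n v hv hv0.ge).map_fun_eq_pi_map fun l => (hm l).aemeasurable,
    Measure.map_map measurable_partialSum (measurable_pi_lambda _ hm)]
  congr 1
  funext ω
  conv_lhs => rw [← Fin.partialSum_left_neg fun i => S ω (v i)]
  ext i
  simp [hv0, hS.zero, neg_add_eq_sub]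

lemma map_eq_of_monotone [IsProbabilityMeasure P] (hS : IsStableSubordinator β P S)
    (hS' : IsStableSubordinator β P S') {n : ℕ} {v : Fin (n + 1) → ℝ} (hv : Monotone v)
    (hv0 : v 0 = 0) :
    P.map (fun ω i => S ω (v i)) = P.map (fun ω i => S' ω (v i)) := by
  rw [hS.map_eq_pi_map_partialSum hv hv0, hS'.map_eq_pi_map_partialSum hv hv0]
  congr 2
  funext l
  exact hS.map_sub_eq hS' (hv0 ▸ hv (Fin.zero_le _)) (hv Fin.castSucc_lt_succ.le)

lemma map_eq [IsProbabilityMeasure P] (hS : IsStableSubordinator β P S)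
    (hS' : IsStableSubordinator β P S') {k : ℕ} {u : Fin k → ℝ} (hu : ∀ j, 0 ≤ u j) :
    P.map (fun ω j => S ω (u j)) = P.map (fun ω j => S' ω (u j)) := by
  set π := Tuple.sort u
  set v : Fin (k + 1) → ℝ := Fin.cons 0 (u ∘ π)
  have hv : Monotone v := by
    intro i j hij
    cases i using Fin.cases with
    | zero => cases j using Fin.cases with
      | zero => exact le_rfl
      | succ j => exact hu _
    | succ i => cases j using Fin.cases with
      | zero => exact absurd hij (by simp)
      | succ j => exact Tuple.monotone_sort u (Fin.succ_le_succ_iff.mp hij)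
  have hreindex : ∀ T : Ω → ℝ → ℝ, Measurable (fun ω i => T ω (v i)) →
      P.map (fun ω j => T ω (u j))
        = (P.map fun ω i => T ω (v i)).map fun y j => y (π.symm j).succ := by
    intro T hT
    rw [Measure.map_map (by fun_prop) hT]
    congr 1
    funext ω j
    simp [v]
  rw [hreindex S (measurable_pi_lambda _ fun i => hS.meas _),
    hreindex S' (measurable_pi_lambda _ fun i => hS'.meas _), hS.map_eq_of_monotone hS' hv rfl]

lemma measure_forall_invProc_le [IsProbabilityMeasure P] (hS : IsStableSubordinator β P S)
    {k : ℕ} (s : Fin k → ℝ) {u : Fin k → ℝ} (hu : ∀ j, 0 ≤ u j) :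
    P {ω | ∀ j, invProc S ω (s j) ≤ u j} = P {ω | ∀ j, s j ≤ S ω (u j)} := by
  have hbdd : ∀ᵐ ω ∂P, ∀ j, ¬ ∀ n : ℕ, S ω n < s j :=
    ae_all_iff.mpr fun j => measure_eq_zero_iff_ae_notMem.mp (hS.measure_forall_lt_eq_zero (s j))
  refine measure_congr (hbdd.mono fun ω hω => propext (forall_congr' fun j => ?_))
  exact (invProc_le_iff (hS.mono ω) (hS.rightCont ω _) (hu j)).trans (or_iff_right (hω j))

lemma map_invProc_eq [IsProbabilityMeasure P] (hS : IsStableSubordinator β P S)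
    (hS' : IsStableSubordinator β P S') {k : ℕ} (s : Fin k → ℝ) :
    P.map (fun ω j => invProc S ω (s j)) = P.map (fun ω j => invProc S' ω (s j)) := by
  have hm : ∀ {T}, IsStableSubordinator β P T → Measurable fun ω j => invProc T ω (s j) :=
    fun hT => measurable_pi_lambda _ fun j => hT.measurable_invProc (s j)
  have := Measure.isProbabilityMeasure_map (μ := P) (hm hS).aemeasurable
  have := Measure.isProbabilityMeasure_map (μ := P) (hm hS').aemeasurable
  refine Measure.ext_of_pi_Iic fun u => ?_
  rw [Measure.map_apply (hm hS) (.univ_pi fun _ => measurableSet_Iic),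
    Measure.map_apply (hm hS') (.univ_pi fun _ => measurableSet_Iic)]
  by_cases hu : ∀ j, 0 ≤ u j
  · have hA : MeasurableSet (pi univ fun j => Ici (s j)) := .univ_pi fun _ => measurableSet_Ici
    have := congrArg (fun μ : Measure (Fin k → ℝ) => μ (pi univ fun j => Ici (s j)))
      (hS.map_eq hS' hu)
    simp only [Measure.map_apply (measurable_pi_lambda _ fun j => hS.meas _) hA,
      Measure.map_apply (measurable_pi_lambda _ fun j => hS'.meas _) hA] at this
    convert this using 1 <;> [convert hS.measure_forall_invProc_le s hu using 2;
      convert hS'.measure_forall_invProc_le s hu using 2] <;> ext <;> simp [Pi.le_def]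
  · obtain ⟨j, hj⟩ := not_forall.mp hu
    have hempty : ∀ T : Ω → ℝ → ℝ,
        (fun ω j => invProc T ω (s j)) ⁻¹' (pi univ fun j => Iic (u j)) = ∅ :=
      fun T => eq_empty_of_forall_notMem fun ω hω =>
        hj ((invProc_nonneg T ω (s j)).trans (hω j (mem_univ j)))
    rw [hempty, hempty]

lemma rescale (hS : IsStableSubordinator β P S) {c : ℝ} (hc : 0 < c) :
    IsStableSubordinator β P fun ω u => c⁻¹ * S ω (c ^ β * u) := by
  have hr : 0 < c ^ β := Real.rpow_pos_of_pos hc β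
  refine ⟨fun ω => by simp [hS.zero ω], fun ω a b hab => ?_, fun ω u => ?_,
    fun u => (hS.meas _).const_mul _, fun n t ht ht0 => ?_, fun θ hθ v u hv hvu => ?_⟩
  · exact mul_le_mul_of_nonneg_left (hS.mono ω (mul_le_mul_of_nonneg_left hab hr.le))
      (by positivity)
  · exact ((hS.rightCont ω _).comp (continuous_const_mul _).continuousWithinAt
      fun w hw => mul_le_mul_of_nonneg_left hw hr.le).const_smul c⁻¹
  · have hind := hS.indep n (fun i => c ^ β * t i)
      (fun i j hij => mul_le_mul_of_nonneg_left (ht hij) hr.le) (by positivity)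
    convert hind.comp (fun _ x => c⁻¹ * x) (fun _ => measurable_const_mul _) using 2 with i
    funext ω
    simp only [Function.comp_apply]
    ring
  · have := hS.laplace (θ / c) (by positivity) (c ^ β * v) (c ^ β * u) (by positivity)
      (mul_le_mul_of_nonneg_left hvu hr.le)
    refine (integral_congr_ae (ae_of_all _ fun ω => ?_)).trans (this.trans ?_)
    · ring_nf
    · rw [Real.div_rpow hθ hc.le]
      field_simp

lemma map_invProc_const_mul [IsProbabilityMeasure P] (hS : IsStableSubordinator β P S)
    {c : ℝ} (hc : 0 < c) {k : ℕ} (s : Fin k → ℝ) :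
    P.map (fun ω j => invProc S ω (c * s j)) = P.map (fun ω j => c ^ β * invProc S ω (s j)) := by
  have hr : 0 < c ^ β := Real.rpow_pos_of_pos hc β
  have hscale : ∀ ω m, invProc S ω (c * m)
      = c ^ β * invProc (fun ω u => c⁻¹ * S ω (c ^ β * u)) ω m := fun ω m => by
    rw [invProc_comp_mul hc hr, mul_inv_cancel_left₀ hr.ne']
  have hm : ∀ {T}, IsStableSubordinator β P T → Measurable fun ω j => invProc T ω (s j) :=
    fun hT => measurable_pi_lambda _ fun j => hT.measurable_invProc (s j)
  have hmap : ∀ {T}, IsStableSubordinator β P T →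
      P.map (fun ω j => c ^ β * invProc T ω (s j))
        = (P.map fun ω j => invProc T ω (s j)).map fun y j => c ^ β * y j :=
    fun hT => (Measure.map_map (g := fun y j => c ^ β * y j) (by fun_prop) (hm hT)).symm
  simp_rw [hscale]
  rw [hmap (hS.rescale hc), hmap hS, (hS.rescale hc).map_invProc_eq hS]

lemma lintegral_abs_sum_invProc_const_mul [IsProbabilityMeasure P]
    (hS : IsStableSubordinator β P S) {c : ℝ} (hc : 0 < c) (α : ℝ) {k : ℕ} (θ s : Fin k → ℝ) :
    ∫⁻ ω, ENNReal.ofReal (|∑ j, θ j * invProc S ω (c * s j)| ^ α) ∂P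
      = ENNReal.ofReal (c ^ (β * α)) *
          ∫⁻ ω, ENNReal.ofReal (|∑ j, θ j * invProc S ω (s j)| ^ α) ∂P := by
  have hF : Measurable fun z : Fin k → ℝ => ENNReal.ofReal (|∑ j, θ j * z j| ^ α) := by
    fun_prop
  have hm : ∀ s' : Fin k → ℝ, Measurable fun ω j => invProc S ω (s' j) :=
    fun s' => measurable_pi_lambda _ fun j => hS.measurable_invProc (s' j)
  have hcs : Measurable fun ω j => c ^ β * invProc S ω (s j) :=
    measurable_pi_lambda _ fun j => (hS.measurable_invProc _).const_mul _
  rw [← lintegral_map hF (hm _), hS.map_invProc_const_mul hc, lintegral_map hF hcs,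
    ← lintegral_const_mul' _ _ ENNReal.ofReal_ne_top]
  refine lintegral_congr fun ω => ?_
  have hr : 0 < c ^ β := Real.rpow_pos_of_pos hc β
  have hsum : ∑ j, θ j * (c ^ β * invProc S ω (s j))
      = c ^ β * ∑ j, θ j * invProc S ω (s j) := by
    rw [Finset.mul_sum]
    exact Finset.sum_congr rfl fun j _ => mul_left_comm _ _ _
  beta_reduce
  rw [hsum, abs_mul, abs_of_pos hr, Real.mul_rpow hr.le (abs_nonneg _), ← Real.rpow_mul hc.le,
    ENNReal.ofReal_mul (by positivity)]

end IsStableSubordinator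

theorem mittagLeffler_fractional_SaS_self_similar_general
    {Ω : Type*} [MeasurableSpace Ω] (P : Measure Ω) [IsProbabilityMeasure P]
    (α β : ℝ) (hα0 : 0 < α)
    (S : Ω → ℝ → ℝ) (hS : IsStableSubordinator β P S)
    (c : ℝ) (hc : 0 < c) (k : ℕ)
    (t : Fin k → ℝ) (θ : Fin k → ℝ) :
    ∫⁻ x in Set.Ioi (0 : ℝ),
        (∫⁻ ω, ENNReal.ofReal
            (|∑ j, θ j * invProc S ω (max (c * t j - x) 0)| ^ α) ∂P)
          * ENNReal.ofReal ((1 - β) * x ^ (-β))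
      = ENNReal.ofReal (c ^ (α * (β + (1 - β) / α))) *
        ∫⁻ x in Set.Ioi (0 : ℝ),
          (∫⁻ ω, ENNReal.ofReal
              (|∑ j, θ j * invProc S ω (max (t j - x) 0)| ^ α) ∂P)
            * ENNReal.ofReal ((1 - β) * x ^ (-β)) := by
  have hexp : c ^ (α * (β + (1 - β) / α)) = c * (c ^ (β * α) * c ^ (-β)) := by
    rw [← Real.rpow_add hc, mul_comm c, ← Real.rpow_add_one hc.ne']
    congr 1
    field_simp
    ring
  have hweight : ∀ y : ℝ, 0 < y → ENNReal.ofReal ((1 - β) * (c * y) ^ (-β))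
      = ENNReal.ofReal (c ^ (-β)) * ENNReal.ofReal ((1 - β) * y ^ (-β)) := fun y hy => by
    rw [← ENNReal.ofReal_mul (by positivity), Real.mul_rpow hc.le hy.le, mul_left_comm]
  rw [setLIntegral_Ioi_zero_eq_ofReal_mul_comp_mul_left _ hc, hexp,
    ENNReal.ofReal_mul hc.le, ENNReal.ofReal_mul (by positivity), mul_assoc]
  congr 1
  rw [mul_assoc, ← lintegral_const_mul' _ _ ENNReal.ofReal_ne_top,
    ← lintegral_const_mul' _ _ ENNReal.ofReal_ne_top]
  refine setLIntegral_congr_fun measurableSet_Ioi fun y (hy : 0 < y) => ?_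
  have harg : ∀ j, max (c * t j - c * y) 0 = c * max (t j - y) 0 := fun j => by
    rw [← mul_sub, mul_max_of_nonneg _ _ hc.le, mul_zero]
  simp only [harg, hS.lintegral_abs_sum_invProc_const_mul hc, hweight y hy]
  ring

/-- Self-similarity (with exponent `H = β + (1-β)/α`) of the β-Mittag-Leffler
fractional SαS motion, expressed through its finite-dimensional characteristic
functional. -/
theorem mittagLeffler_fractional_SaS_self_similar
    {Ω : Type*} [MeasurableSpace Ω] (P : Measure Ω) [IsProbabilityMeasure P]
    (α β : ℝ) (hα0 : 0 < α) (hα2 : α < 2) (hβ0 : 0 < β) (hβ1 : β < 1)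
    (S : Ω → ℝ → ℝ) (hS : IsStableSubordinator β P S)
    (c : ℝ) (hc : 0 < c) (k : ℕ) (hk : 1 ≤ k)
    (t : Fin k → ℝ) (ht : ∀ j, 0 ≤ t j) (θ : Fin k → ℝ) :
    ∫⁻ x in Set.Ioi (0 : ℝ),
        (∫⁻ ω, ENNReal.ofReal
            (|∑ j, θ j * invProc S ω (max (c * t j - x) 0)| ^ α) ∂P)
          * ENNReal.ofReal ((1 - β) * x ^ (-β))
      = ENNReal.ofReal (c ^ (α * (β + (1 - β) / α))) *
        ∫⁻ x in Set.Ioi (0 : ℝ),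
          (∫⁻ ω, ENNReal.ofReal
              (|∑ j, θ j * invProc S ω (max (t j - x) 0)| ^ α) ∂P)
            * ENNReal.ofReal ((1 - β) * x ^ (-β)) :=
  mittagLeffler_fractional_SaS_self_similar_general P α β hα0 S hS c hc k t θ
end

section
/- Let 0<β<1 and let M_β be the Mittag-Leffler process (the inverse of a β-stable subordinator). For B>0 define the random variable K = sup_{0≤s<t<s+1/2≤B} |M_β(t) − M_β(s)| / ( (t−s)^β |log(t−s)|^{1−β} ). Then K is almost surely finite and has finite moments of all orders, i.e. E[K^p] < ∞ for every p>0. -/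
/-!
On the event `goodEvent S β B k`, at every dyadic scale `2⁻ⁿ` the subordinator rises by more
than `2⁻ⁿ` across every two consecutive cells of a grid of mesh
`x = ((k+2)(n+1))^(1-β) 2^(-nβ)` covering the range of the inverse on `[0, B]`. Then the inverse
moves by at most `3x` over any interval of length in `(2^-(n+1), 2⁻ⁿ]`, whence `K ≤ 18 (k + 2)`.
Chernoff's bound with the Laplace transform `exp (-w θ^β)` at `θ = (k+2)(n+1) 2ⁿ` shows that a
single increment fails with probability `exp (-(k+2)(n+1))`; summing over the `O(2ⁿ)` cells and
over all scales gives `P (goodEventᶜ) = O(k e^{-k})`. By Borel–Cantelli `K` is a.s. finite, and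
`E[K^p] ≤ 36^p + Σ_k (18 (k+3))^p P (goodEventᶜ) < ∞`.
-/

open MeasureTheory ProbabilityTheory Filter
open scoped ENNReal

/-- The (random) Hölder constant of the Mittag-Leffler process over `[0, B]`:
`K = sup_{0 ≤ s < t < s + 1/2 ≤ B} |M_β(t) - M_β(s)| / ((t-s)^β |log (t-s)|^{1-β})`,
computed in `ℝ≥0∞`. -/
noncomputable def holderSup {Ω : Type*} (S : Ω → ℝ → ℝ) (β B : ℝ) (ω : Ω) : ℝ≥0∞ :=
  ⨆ (s : ℝ) (t : ℝ) (_ : 0 ≤ s ∧ s < t ∧ t < s + 1 / 2 ∧ s + 1 / 2 ≤ B),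
    ENNReal.ofReal
      (|invProc S ω t - invProc S ω s| /
        ((t - s) ^ β * |Real.log (t - s)| ^ (1 - β)))

open Real

section InverseProcess

variable {Ω : Type*} {S : Ω → ℝ → ℝ} {ω : Ω}

lemma bddBelow_invProc_set (t : ℝ) : BddBelow {u : ℝ | 0 ≤ u ∧ t ≤ S ω u} :=
  ⟨0, fun _ hu => hu.1⟩

lemma invProc_nonneg_s2 {t W : ℝ} (hW : 0 ≤ W) (htW : t ≤ S ω W) : 0 ≤ invProc S ω t :=
  le_csInf ⟨W, hW, htW⟩ fun _ hu => hu.1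

lemma invProc_le {t W : ℝ} (hW : 0 ≤ W) (htW : t ≤ S ω W) : invProc S ω t ≤ W :=
  csInf_le (bddBelow_invProc_set t) ⟨hW, htW⟩

lemma invProc_mono {s t W : ℝ} (hst : s ≤ t) (hW : 0 ≤ W) (htW : t ≤ S ω W) :
    invProc S ω s ≤ invProc S ω t :=
  csInf_le_csInf (bddBelow_invProc_set s) ⟨W, hW, htW⟩ fun _ hu => ⟨hu.1, hst.trans hu.2⟩

lemma le_apply_invProc (hmono : Monotone (S ω))
    (hrc : ∀ u, ContinuousWithinAt (S ω) (Set.Ici u) u)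
    {t W : ℝ} (hW : 0 ≤ W) (htW : t ≤ S ω W) : t ≤ S ω (invProc S ω t) := by
  have hle : ∀ v, invProc S ω t < v → t ≤ S ω v := fun v hv => by
    obtain ⟨u, hu, huv⟩ := exists_lt_of_csInf_lt (s := {u | 0 ≤ u ∧ t ≤ S ω u}) ⟨W, hW, htW⟩ hv
    exact hu.2.trans (hmono huv.le)
  exact ge_of_tendsto ((hrc _).mono_left (nhdsWithin_mono _ Set.Ioi_subset_Ici_self))
    (eventually_nhdsWithin_of_forall hle)

lemma apply_lt_of_lt_invProc {t v : ℝ} (hv : 0 ≤ v) (hvt : v < invProc S ω t) : S ω v < t :=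
  not_le.1 fun h => (csInf_le (bddBelow_invProc_set t) ⟨hv, h⟩).not_gt hvt

def incrementsExceed (S : Ω → ℝ → ℝ) (W x h : ℝ) : Set Ω :=
  ⋂ j ∈ Finset.Iic ⌈W / x⌉₊, {ω | h < S ω (j * x + 2 * x) - S ω (j * x)}

/-- If `M(t) - M(s) > 3x`, then the grid cell pair starting at `⌈M(s)/x⌉ x` lies inside
`[M(s), M(t))`, where `S ω` rises by less than `t - s`. -/
lemma invProc_sub_le_of_mem_incrementsExceed (hmono : Monotone (S ω))
    (hrc : ∀ u, ContinuousWithinAt (S ω) (Set.Ici u) u)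
    {s t W x h : ℝ} (hW : 0 ≤ W) (hx : 0 < x) (hst : s ≤ t) (htW : t ≤ S ω W)
    (hth : t - s ≤ h) (hω : ω ∈ incrementsExceed S W x h) :
    invProc S ω t - invProc S ω s ≤ 3 * x := by
  by_contra! hgap
  have hsW : s ≤ S ω W := hst.trans htW
  have hMs := invProc_nonneg_s2 hW hsW
  set j := ⌈invProc S ω s / x⌉₊
  have hju : invProc S ω s ≤ j * x := (div_le_iff₀ hx).1 (Nat.le_ceil _)
  have hjl : j * x < invProc S ω s + x := by
    have := mul_lt_mul_of_pos_right (Nat.ceil_lt_add_one (div_nonneg hMs hx.le)) hx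
    rwa [add_mul, div_mul_cancel₀ _ hx.ne', one_mul] at this
  have hjW : j ≤ ⌈W / x⌉₊ :=
    Nat.ceil_mono (div_le_div_of_nonneg_right (invProc_le hW hsW) hx.le)
  have hinc : h < S ω (j * x + 2 * x) - S ω (j * x) := by
    simp only [incrementsExceed, Set.mem_iInter, Finset.mem_Iic] at hω
    exact hω j hjW
  have hlow : s ≤ S ω (j * x) := (le_apply_invProc hmono hrc hW hsW).trans (hmono hju)
  have hhigh : S ω (j * x + 2 * x) < t := apply_lt_of_lt_invProc (by positivity) (by linarith)
  linarith

end InverseProcess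

section GridStep

variable {β : ℝ}

/-- Grid mesh at dyadic scale `2⁻ⁿ` for the `k`-th good event: `λ^(1-β) h^β` with
`λ = (k+2)(n+1)` and `h = 2⁻ⁿ`, so that a `β`-stable increment over two cells stays below `h`
with probability at most `exp (-λ)`. -/
noncomputable def gridStep (β : ℝ) (k n : ℕ) : ℝ :=
  (((k : ℝ) + 2) * (n + 1)) ^ (1 - β) * ((1 / 2 : ℝ) ^ n) ^ β

lemma gridStep_pos (k n : ℕ) : 0 < gridStep β k n := by
  unfold gridStep; positivity

lemma half_pow_le_gridStep (hβ1 : β ≤ 1) (k n : ℕ) :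
    (1 / 2 : ℝ) ^ n ≤ gridStep β k n := by
  have hlam : 1 ≤ ((k : ℝ) + 2) * (n + 1) := by nlinarith [(k.cast_nonneg : (0 : ℝ) ≤ k),
    (n.cast_nonneg : (0 : ℝ) ≤ n)]
  have hh : (1 / 2 : ℝ) ^ n ≤ 1 := pow_le_one₀ (by norm_num) (by norm_num)
  calc (1 / 2 : ℝ) ^ n ≤ ((1 / 2 : ℝ) ^ n) ^ β := self_le_rpow_of_le_one (by positivity) hh hβ1
    _ ≤ gridStep β k n :=
      le_mul_of_one_le_left (by positivity) (one_le_rpow hlam (by linarith))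

lemma three_mul_gridStep_le (hβ0 : 0 ≤ β) (hβ1 : β ≤ 1) {d : ℝ} (hd : d < 1 / 2) (k n : ℕ)
    (hlow : (1 / 2 : ℝ) ^ (n + 1) < d) (hup : d ≤ (1 / 2 : ℝ) ^ n) :
    3 * gridStep β k n ≤ 18 * (k + 2) * (d ^ β * |log d| ^ (1 - β)) := by
  have hd0 : 0 < d := lt_of_le_of_lt (by positivity) hlow
  have hk : (1 : ℝ) ≤ 3 * (k + 2) := by linarith [(k.cast_nonneg : (0 : ℝ) ≤ k)]
  have hlog : |log d| = -log d := abs_of_neg (log_neg hd0 (by linarith))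
  have hlog_half : log 2 ≤ |log d| := by
    rw [hlog, ← neg_le_neg_iff, neg_neg, ← log_inv, ← one_div]
    exact log_le_log hd0 hd.le
  have hlog_pow : n * log 2 ≤ |log d| := by
    have := log_le_log hd0 hup
    rw [log_pow, one_div, log_inv] at this
    linarith
  have hn : (n : ℝ) + 1 ≤ 3 * |log d| := by
    have := log_two_gt_d9
    nlinarith
  have hscale : (1 / 2 : ℝ) ^ n ≤ 2 * d := by rw [pow_succ] at hlow; linarith
  have hfirst : (((k : ℝ) + 2) * (n + 1)) ^ (1 - β) ≤ 3 * (k + 2) * |log d| ^ (1 - β) :=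
    calc (((k : ℝ) + 2) * (n + 1)) ^ (1 - β) ≤ (3 * (k + 2) * |log d|) ^ (1 - β) :=
          rpow_le_rpow (by positivity) (by nlinarith) (by linarith)
      _ = (3 * (k + 2)) ^ (1 - β) * |log d| ^ (1 - β) := mul_rpow (by positivity) (abs_nonneg _)
      _ ≤ 3 * (k + 2) * |log d| ^ (1 - β) := by
          gcongr; exact rpow_le_self_of_one_le hk (by linarith)
  have hsecond : ((1 / 2 : ℝ) ^ n) ^ β ≤ 2 * d ^ β :=
    calc ((1 / 2 : ℝ) ^ n) ^ β ≤ (2 * d) ^ β := by gcongr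
      _ = 2 ^ β * d ^ β := mul_rpow (by norm_num) hd0.le
      _ ≤ 2 * d ^ β := by gcongr; exact rpow_le_self_of_one_le (by norm_num) hβ1
  calc 3 * gridStep β k n ≤ 3 * ((3 * (k + 2) * |log d| ^ (1 - β)) * (2 * d ^ β)) := by
        unfold gridStep; gcongr
    _ = 18 * (k + 2) * (d ^ β * |log d| ^ (1 - β)) := by ring

end GridStep

lemma exp_neg_two_le_quarter : exp (-2) ≤ 1 / 4 := by
  have h2 : 2 ≤ exp 1 := by linarith [add_one_le_exp 1]
  have h4 : 4 ≤ exp 2 := by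
    rw [show (2 : ℝ) = 1 + 1 by norm_num, exp_add]; nlinarith
  rw [exp_neg, one_div]
  exact inv_anti₀ (by norm_num) h4

lemma measure_compl_incrementsExceed_le {Ω : Type*} [MeasurableSpace Ω] (μ : Measure Ω)
    {S : Ω → ℝ → ℝ} {W x h q : ℝ}
    (hinc : ∀ j : ℕ, μ {ω | S ω (j * x + 2 * x) - S ω (j * x) ≤ h} ≤ ENNReal.ofReal q) :
    μ (incrementsExceed S W x h)ᶜ ≤ ENNReal.ofReal ((⌈W / x⌉₊ + 1) * q) := by
  rw [incrementsExceed, Set.compl_iInter₂]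
  calc μ (⋃ j ∈ Finset.Iic ⌈W / x⌉₊, {ω | h < S ω (j * x + 2 * x) - S ω (j * x)}ᶜ)
      ≤ ∑ j ∈ Finset.Iic ⌈W / x⌉₊, μ {ω | h < S ω (j * x + 2 * x) - S ω (j * x)}ᶜ :=
        measure_biUnion_finset_le _ _
    _ ≤ ∑ _j ∈ Finset.Iic ⌈W / x⌉₊, ENNReal.ofReal q :=
        Finset.sum_le_sum fun j _ => by simpa only [Set.compl_ofPred, not_lt] using hinc j
    _ = ENNReal.ofReal ((⌈W / x⌉₊ + 1) * q) := by
        rw [Finset.sum_const, Nat.card_Iic, nsmul_eq_mul, ← ENNReal.ofReal_natCast,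
          ← ENNReal.ofReal_mul (by positivity)]
        push_cast; rfl

def goodEvent {Ω : Type*} (S : Ω → ℝ → ℝ) (β B : ℝ) (k : ℕ) : Set Ω :=
  {ω | B ≤ S ω (B + k + 1)} ∩
    ⋂ n : ℕ, incrementsExceed S (B + k + 1) (gridStep β k n) ((1 / 2 : ℝ) ^ n)

lemma holderSup_le_of_mem_goodEvent {Ω : Type*} {S : Ω → ℝ → ℝ} {ω : Ω} {β B : ℝ} {k : ℕ}
    (hβ0 : 0 ≤ β) (hβ1 : β ≤ 1) (hmono : Monotone (S ω))
    (hrc : ∀ u, ContinuousWithinAt (S ω) (Set.Ici u) u) (hω : ω ∈ goodEvent S β B k) :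
    holderSup S β B ω ≤ ENNReal.ofReal (18 * (k + 2)) := by
  refine iSup₂_le fun s t => iSup_le fun ⟨hs0, hst, hts, hsB⟩ => ENNReal.ofReal_le_ofReal ?_
  have hd0 : 0 < t - s := by linarith
  have hd : t - s < 1 / 2 := by linarith
  obtain ⟨n, hlow, hup⟩ :=
    exists_nat_pow_near_of_lt_one hd0 (by linarith) (by norm_num : (0 : ℝ) < 1 / 2) (by norm_num)
  have hW : 0 ≤ B + k + 1 := by linarith [k.cast_nonneg (α := ℝ)]
  have htW : t ≤ S ω (B + k + 1) := (by linarith : t ≤ B).trans hω.1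
  have hinc := invProc_sub_le_of_mem_incrementsExceed hmono hrc hW (gridStep_pos k n) hst.le htW
    hup (Set.mem_iInter.1 hω.2 n)
  have hlog : 0 < |log (t - s)| := abs_pos.2 (log_neg hd0 (by linarith)).ne
  rw [abs_of_nonneg (sub_nonneg.2 (invProc_mono hst.le hW htW)), div_le_iff₀ (by positivity)]
  exact hinc.trans (three_mul_gridStep_le hβ0 hβ1 hd k n hlow hup)

namespace IsStableSubordinator

variable {Ω : Type*} [MeasurableSpace Ω] {P : Measure Ω} {β : ℝ} {S : Ω → ℝ → ℝ}

lemma measurableSet_goodEvent (hS : IsStableSubordinator β P S) (B : ℝ) (k : ℕ) :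
    MeasurableSet (goodEvent S β B k) :=
  (measurableSet_le measurable_const (hS.meas _)).inter <| .iInter fun _ =>
    Finset.measurableSet_biInter _ fun _ _ =>
      measurableSet_lt measurable_const ((hS.meas _).sub (hS.meas _))

variable [IsFiniteMeasure P]

lemma measure_sub_le_le_exp (hS : IsStableSubordinator β P S) {θ v u : ℝ} (ε : ℝ)
    (hθ : 0 ≤ θ) (hv : 0 ≤ v) (hvu : v ≤ u) :
    P {ω | S ω u - S ω v ≤ ε} ≤ ENNReal.ofReal (exp (θ * ε - (u - v) * θ ^ β)) := by
  set X : Ω → ℝ := fun ω => S ω u - S ω v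
  have hX : Measurable X := (hS.meas u).sub (hS.meas v)
  have hint : Integrable (fun ω => exp (-θ * X ω)) P := by
    refine (integrable_const (1 : ℝ)).mono' (hX.const_mul _).exp.aestronglyMeasurable
      (Eventually.of_forall fun ω => ?_)
    rw [norm_of_nonneg (exp_nonneg _), exp_le_one_iff]
    nlinarith [sub_nonneg.2 (hS.mono ω hvu)]
  have hmgf : mgf X P (-θ) = exp (-(u - v) * θ ^ β) := hS.laplace θ hθ v u hv hvu
  have h := measure_le_le_exp_mul_mgf ε (neg_nonpos.2 hθ) hint
  rw [hmgf, neg_neg, ← exp_add] at h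
  rw [← ofReal_measureReal]
  exact ENNReal.ofReal_le_ofReal (h.trans_eq (by ring_nf))

/-- Chernoff's bound at `θ = λ / h`. -/
lemma measure_increment_le_exp (hS : IsStableSubordinator β P S) {lam h v : ℝ}
    (hlam : 0 ≤ lam) (hh : 0 < h) (hv : 0 ≤ v) :
    P {ω | S ω (v + 2 * (lam ^ (1 - β) * h ^ β)) - S ω v ≤ h}
      ≤ ENNReal.ofReal (exp (-lam)) := by
  refine (hS.measure_sub_le_le_exp h (div_nonneg hlam hh.le) hv
    (le_add_of_nonneg_right (by positivity))).trans_eq ?_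
  have hpow : lam ^ (1 - β) * lam ^ β = lam := by
    rw [← rpow_add' hlam (by norm_num), sub_add_cancel, rpow_one]
  rw [div_rpow hlam hh.le, add_sub_cancel_left, div_mul_cancel₀ _ hh.ne']
  have hcancel : 2 * (lam ^ (1 - β) * h ^ β) * (lam ^ β / h ^ β) = 2 * lam :=
    calc 2 * (lam ^ (1 - β) * h ^ β) * (lam ^ β / h ^ β) = 2 * (lam ^ (1 - β) * lam ^ β) := by
          field_simp [(rpow_pos_of_pos hh β).ne']
      _ = 2 * lam := by rw [hpow]
  rw [hcancel]
  ring_nf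

lemma measure_compl_incrementsExceed_gridStep_le (hβ1 : β ≤ 1)
    (hS : IsStableSubordinator β P S) {W : ℝ} (hW : 0 ≤ W) (k n : ℕ) :
    P (incrementsExceed S W (gridStep β k n) ((1 / 2 : ℝ) ^ n))ᶜ
      ≤ ENNReal.ofReal ((W + 2) * exp (-(k + 2)) * (1 / 2) ^ n) := by
  set x := gridStep β k n
  have hx : 0 < x := gridStep_pos k n
  refine (measure_compl_incrementsExceed_le P (q := exp (-((k + 2) * (n + 1)))) fun j =>
    hS.measure_increment_le_exp (by positivity) (by positivity) (by positivity)).trans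
    (ENNReal.ofReal_le_ofReal ?_)
  have hcount : (⌈W / x⌉₊ : ℝ) + 1 ≤ (W + 2) * 2 ^ n := by
    have hWx : W / x ≤ W * 2 ^ n := by
      rw [div_le_iff₀ hx]
      calc W ≤ W * (2 ^ n * (1 / 2) ^ n) := by rw [← mul_pow]; norm_num
        _ ≤ W * (2 ^ n * x) := by gcongr; exact half_pow_le_gridStep hβ1 k n
        _ = W * 2 ^ n * x := by ring
    have := Nat.ceil_lt_add_one (div_nonneg hW hx.le)
    nlinarith [one_le_pow₀ (M₀ := ℝ) (a := 2) (n := n) (by norm_num)]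
  have hdecay : exp (-((k + 2) * (n + 1))) ≤ exp (-(k + 2)) * (1 / 4) ^ n :=
    calc exp (-((k + 2) * (n + 1))) = exp (-(k + 2)) * exp (-((k + 2) * n)) := by
          rw [← exp_add]; ring_nf
      _ ≤ exp (-(k + 2)) * exp (-2) ^ n := by
          rw [← exp_nat_mul]; gcongr; nlinarith [(n.cast_nonneg : (0 : ℝ) ≤ n),
            (k.cast_nonneg : (0 : ℝ) ≤ k)]
      _ ≤ exp (-(k + 2)) * (1 / 4) ^ n := by gcongr; exact exp_neg_two_le_quarter
  calc ((⌈W / x⌉₊ : ℝ) + 1) * exp (-((k + 2) * (n + 1)))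
      ≤ ((W + 2) * 2 ^ n) * (exp (-(k + 2)) * (1 / 4) ^ n) := by gcongr
    _ = (W + 2) * exp (-(k + 2)) * (1 / 2) ^ n := by
        have h2 : (2 : ℝ) ^ n * (1 / 2) ^ n = 1 := by rw [← mul_pow]; norm_num
        rw [show (1 / 4 : ℝ) = 1 / 2 * (1 / 2) by norm_num, mul_pow]
        linear_combination (W + 2) * exp (-(k + 2)) * (1 / 2) ^ n * h2

lemma measure_compl_goodEvent_le (hβ1 : β ≤ 1)
    (hS : IsStableSubordinator β P S) {B : ℝ} (hB : 0 ≤ B) (k : ℕ) :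
    P (goodEvent S β B k)ᶜ ≤ ENNReal.ofReal ((B + k + 4) * exp (-k)) := by
  have hW : 0 ≤ B + k + 1 := by positivity
  have hlevel : P {ω | B ≤ S ω (B + k + 1)}ᶜ ≤ ENNReal.ofReal (exp (-(k + 1))) := by
    refine (measure_mono fun ω hω => ?_).trans
      ((hS.measure_sub_le_le_exp B zero_le_one le_rfl hW).trans_eq ?_)
    · simp only [Set.mem_compl_iff, Set.mem_ofPred_eq, not_le, hS.zero] at hω ⊢
      linarith
    · rw [one_rpow]; ring_nf
  have hgrid : P (⋂ n : ℕ, incrementsExceed S (B + k + 1) (gridStep β k n) ((1 / 2 : ℝ) ^ n))ᶜ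
      ≤ ENNReal.ofReal ((B + k + 3) * exp (-(k + 2)) * 2) := by
    have hsum := (summable_geometric_two).mul_left ((B + k + 3) * exp (-(k + 2)))
    have htsum : (B + k + 3) * exp (-(k + 2)) * 2
        = ∑' n : ℕ, (B + k + 3) * exp (-(k + 2)) * (1 / 2) ^ n := by
      rw [tsum_mul_left, tsum_geometric_two]
    rw [Set.compl_iInter, htsum, ENNReal.ofReal_tsum_of_nonneg (fun _ => by positivity) hsum]
    refine (measure_iUnion_le _).trans (ENNReal.tsum_le_tsum fun n => ?_)
    convert hS.measure_compl_incrementsExceed_gridStep_le hβ1 hW k n using 3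
    ring
  rw [goodEvent, Set.compl_inter]
  refine (measure_union_le _ _).trans ((add_le_add hlevel hgrid).trans ?_)
  rw [← ENNReal.ofReal_add (by positivity) (by positivity)]
  refine ENNReal.ofReal_le_ofReal ?_
  have h1 : exp (-(k + 1)) ≤ exp (-k) := exp_le_exp.2 (by linarith)
  have h2 : exp (-(k + 2)) ≤ exp (-k) * (1 / 4) := by
    rw [show -((k : ℝ) + 2) = -k + -2 by ring, exp_add]
    gcongr; exact exp_neg_two_le_quarter
  nlinarith [exp_pos (-(k : ℝ))]

end IsStableSubordinator

lemma summable_add_rpow_mul_exp_neg {a : ℝ} (ha : 1 ≤ a) (q : ℝ) :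
    Summable fun k : ℕ => ((k : ℝ) + a) ^ q * exp (-k) := by
  set N := ⌈q⌉₊
  have hshift : Summable fun k : ℕ => a ^ N * exp 1 * (((k + 1 : ℕ) : ℝ) ^ N *
      exp (-1 * ((k + 1 : ℕ) : ℝ))) :=
    ((summable_nat_add_iff 1).2 (summable_pow_mul_exp_neg_nat_mul N one_pos)).mul_left _
  have hk : ∀ k : ℕ, (0 : ℝ) ≤ k + a := fun k => by linarith [k.cast_nonneg (α := ℝ)]
  refine hshift.of_nonneg_of_le (fun k => mul_nonneg (rpow_nonneg (hk k) _) (exp_nonneg _))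
    fun k => ?_
  have hk : (0 : ℝ) ≤ k := k.cast_nonneg
  calc ((k : ℝ) + a) ^ q * exp (-k) ≤ ((k : ℝ) + a) ^ (N : ℝ) * exp (-k) := by
        gcongr
        · linarith
        · exact Nat.le_ceil q
    _ ≤ (a * (k + 1)) ^ N * exp (-k) := by
        rw [rpow_natCast]; gcongr; nlinarith
    _ = a ^ N * exp 1 * (((k + 1 : ℕ) : ℝ) ^ N * exp (-1 * ((k + 1 : ℕ) : ℝ))) := by
        rw [mul_pow, mul_mul_mul_comm, ← exp_add]; push_cast; ring_nf

lemma tsum_rpow_mul_le_ne_top {m : ℕ → ℝ≥0∞} {B c p : ℝ} (hB : 0 ≤ B) (hc : 0 ≤ c)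
    (hp : 0 ≤ p) (hm : ∀ k : ℕ, m k ≤ ENNReal.ofReal ((B + k + 4) * exp (-k))) :
    ∑' k : ℕ, ENNReal.ofReal (c * (((k + 1 : ℕ) : ℝ) + 2)) ^ p * m k ≠ ⊤ := by
  have hsum := (summable_add_rpow_mul_exp_neg (a := B + 4) (by linarith) (p + 1)).mul_left (c ^ p)
  refine ne_top_of_le_ne_top
    (ENNReal.ofReal_ne_top (r := ∑' k : ℕ, c ^ p * ((k + (B + 4)) ^ (p + 1) * exp (-k)))) ?_
  rw [ENNReal.ofReal_tsum_of_nonneg (fun k => by positivity) hsum]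
  refine ENNReal.tsum_le_tsum fun k => ?_
  have hk : (0 : ℝ) ≤ k := k.cast_nonneg
  calc ENNReal.ofReal (c * (((k + 1 : ℕ) : ℝ) + 2)) ^ p * m k
      ≤ ENNReal.ofReal ((c * (k + (B + 4))) ^ p) * ENNReal.ofReal ((B + k + 4) * exp (-k)) := by
        rw [ENNReal.ofReal_rpow_of_nonneg (by positivity) hp]
        gcongr ENNReal.ofReal ((c * ?_) ^ p) * ?_
        · push_cast; linarith
        · exact hm k
    _ = ENNReal.ofReal (c ^ p * ((k + (B + 4)) ^ (p + 1) * exp (-k))) := by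
        rw [← ENNReal.ofReal_mul (by positivity), mul_rpow hc (by positivity),
          rpow_add_one (by positivity)]
        congr 1; ring

lemma lintegral_le_of_le_on_cover {Ω : Type*} [MeasurableSpace Ω] {μ : Measure Ω}
    {X : Ω → ℝ≥0∞} {E : ℕ → Set Ω} {a : ℕ → ℝ≥0∞} (hE : ∀ k, MeasurableSet (E k))
    (hcover : ∀ᵐ ω ∂μ, ∃ k, ω ∈ E k) (hX : ∀ k, ∀ ω ∈ E k, X ω ≤ a k) :
    ∫⁻ ω, X ω ∂μ ≤ a 0 * μ Set.univ + ∑' k, a (k + 1) * μ (E k)ᶜ := by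
  classical
  have hpt : ∀ᵐ ω ∂μ, X ω ≤ a 0 + ∑' k, (E k)ᶜ.indicator (fun _ => a (k + 1)) ω := by
    filter_upwards [hcover] with ω hω
    by_cases h0 : Nat.find hω = 0
    · exact (hX 0 ω (h0 ▸ Nat.find_spec hω)).trans le_self_add
    · obtain ⟨k, hk⟩ : ∃ k, Nat.find hω = k + 1 := ⟨Nat.find hω - 1, by omega⟩
      have hnot : ω ∉ E k := Nat.find_min hω (by omega)
      calc X ω ≤ a (k + 1) := hX _ ω (hk ▸ Nat.find_spec hω)
        _ = (E k)ᶜ.indicator (fun _ => a (k + 1)) ω :=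
          (Set.indicator_of_mem (Set.mem_compl hnot) (fun _ => a (k + 1))).symm
        _ ≤ ∑' k, (E k)ᶜ.indicator (fun _ => a (k + 1)) ω := ENNReal.le_tsum k
        _ ≤ _ := le_add_self
  refine (lintegral_mono_ae hpt).trans_eq ?_
  rw [lintegral_add_left measurable_const, lintegral_const,
    lintegral_tsum fun k => (measurable_const.indicator (hE k).compl).aemeasurable]
  simp only [lintegral_indicator_const (hE _).compl]

/-- The Hölder constant `K` of the Mittag-Leffler process is a.s. finite and has
finite moments of all orders. -/
theorem mittagLeffler_holder_constant_finite_moments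
    {Ω : Type*} [MeasurableSpace Ω] (P : Measure Ω) [IsProbabilityMeasure P]
    (β : ℝ) (hβ0 : 0 < β) (hβ1 : β < 1)
    (S : Ω → ℝ → ℝ) (hS : IsStableSubordinator β P S)
    (B : ℝ) (hB : 0 < B) :
    (∀ᵐ ω ∂P, holderSup S β B ω < ⊤) ∧
      ∀ p : ℝ, 0 < p → ∫⁻ ω, holderSup S β B ω ^ p ∂P < ⊤ := by
  have htail := hS.measure_compl_goodEvent_le hβ1.le hB.le
  have hbound : ∀ k, ∀ ω ∈ goodEvent S β B k,
      holderSup S β B ω ≤ ENNReal.ofReal (18 * (k + 2)) := fun k ω =>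
    holderSup_le_of_mem_goodEvent hβ0.le hβ1.le (hS.mono ω) (hS.rightCont ω)
  have hcover : ∀ᵐ ω ∂P, ∃ k, ω ∈ goodEvent S β B k := by
    have hsum : ∑' k, P (goodEvent S β B k)ᶜ ≠ ⊤ := by
      simpa using tsum_rpow_mul_le_ne_top (c := 1) (p := 0) hB.le zero_le_one le_rfl htail
    filter_upwards [ae_eventually_notMem hsum] with ω hω
    exact hω.exists.imp fun _ => Set.notMem_compl_iff.1
  refine ⟨?_, fun p hp => ?_⟩
  · filter_upwards [hcover] with ω ⟨k, hk⟩
    exact (hbound k ω hk).trans_lt ENNReal.ofReal_lt_top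
  · refine (lintegral_le_of_le_on_cover (hS.measurableSet_goodEvent B) hcover
      fun k ω hω => ENNReal.rpow_le_rpow (hbound k ω hω) hp.le).trans_lt ?_
    rw [measure_univ, mul_one]
    exact ENNReal.add_lt_top.2 ⟨ENNReal.rpow_lt_top_of_nonneg hp.le ENNReal.ofReal_ne_top,
      (tsum_rpow_mul_le_ne_top hB.le (by norm_num) hp.le htail).lt_top⟩
end

section
/- Let 0<α<2 and 0<β<1, let M_β be the Mittag-Leffler process (the inverse of a β-stable subordinator) on a probability space (Ω',F',P'), and let ν be the measure on [0,∞) with ν(dx) = (1−β)x^{−β}dx. Then for (P'×ν)-almost every (ω',x), the series Σ_{n=1}^∞ ( M_β((n+1−x)_+, ω') − M_β((n−x)_+, ω') )^α diverges to infinity. (This is the key fact showing that the increment process of the β-Mittag-Leffler fractional SαS motion is generated by a conservative flow.) -/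
open MeasureTheory ProbabilityTheory Filter
open scoped ENNReal

/-- The measure `ν(dx) = (1-β) x^{-β} dx` on `[0,∞)`. -/
noncomputable def nuMeasure (β : ℝ) : Measure ℝ :=
  (volume.restrict (Set.Ici (0 : ℝ))).withDensity
    (fun x => ENNReal.ofReal ((1 - β) * x ^ (-β)))

/-!
Almost surely `S_β(t) → ∞`, by a Chernoff bound read off the Laplace transform. The increments
`S_β(2j+2) - S_β(2j)` are independent, and each is `< 1` with probability at least
`exp(-2θ^β) - exp(-θ)`, which is positive for large `θ` because `β < 1`; by the second
Borel–Cantelli lemma, almost surely `S_β` grows by less than `1` on infinitely many intervals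
`[2j, 2j+2]`. For such a `j` and any `x`, with `m = ⌊x + S_β(2j)⌋`, the path stays in the level
band `[m - x, m + 2 - x)` during time `2`, so `M_β` increases by at least `2` across that band and
one of the two consecutive terms `n = m, m + 1` of the series is `≥ 1`. Infinitely many terms
`≥ 1` make the series diverge.
-/

open Real
open scoped Topology

section InverseProcess

variable {Ω : Type*} {S : Ω → ℝ → ℝ} {ω : Ω}

lemma invProc_le_s3 {t u : ℝ} (hu : 0 ≤ u) (h : t ≤ S ω u) : invProc S ω t ≤ u :=
  csInf_le ⟨0, fun _ hv => hv.1⟩ ⟨hu, h⟩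

lemma le_invProc {t c : ℝ} (hne : ∃ u, 0 ≤ u ∧ t ≤ S ω u)
    (h : ∀ u, 0 ≤ u → t ≤ S ω u → c ≤ u) : c ≤ invProc S ω t :=
  le_csInf hne fun u hu => h u hu.1 hu.2

lemma exists_nonneg_le_of_tendsto_atTop {f : ℝ → ℝ} (hf : Tendsto f atTop atTop) (t : ℝ) :
    ∃ u, 0 ≤ u ∧ t ≤ f u :=
  ((eventually_ge_atTop 0).and (hf.eventually_ge_atTop t)).exists

lemma invProc_mono_s3 (htop : Tendsto (S ω) atTop atTop) : Monotone (invProc S ω) :=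
  fun _ _ h => le_invProc (exists_nonneg_le_of_tendsto_atTop htop _) fun _ hu ht =>
    invProc_le_s3 hu (h.trans ht)

lemma sub_le_invProc_sub (hmono : Monotone (S ω)) (htop : Tendsto (S ω) atTop atTop)
    {a b u v : ℝ} (hu : 0 ≤ u) (ha : max a 0 ≤ S ω u) (hb : S ω v < b) :
    v - u ≤ invProc S ω (max b 0) - invProc S ω (max a 0) := by
  have hv : v ≤ invProc S ω (max b 0) :=
    le_invProc (exists_nonneg_le_of_tendsto_atTop htop _) fun w _ hw => le_of_not_gt fun hwv =>
      (hmono hwv.le).not_gt (hb.trans_le ((le_max_left b 0).trans hw))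
  linarith [invProc_le_s3 hu ha]

end InverseProcess

lemma tendsto_sum_Icc_rpow_atTop_of_frequently_one_le {d : ℕ → ℝ} {α : ℝ} (hα : 0 ≤ α)
    (hd : ∀ n, 0 ≤ d n) (hfreq : ∃ᶠ n in atTop, 1 ≤ d n) :
    Tendsto (fun N => ∑ n ∈ Finset.Icc 1 N, d n ^ α) atTop atTop := by
  have hfreq' : ∃ᶠ n in atTop, 1 ≤ d n ^ α :=
    hfreq.mono fun n hn => one_le_rpow hn hα
  have hns : ¬ Summable fun n => d n ^ α := fun hsum =>
    hfreq' ((hsum.tendsto_atTop_zero.eventually (gt_mem_nhds one_pos)).mono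
      fun _ h => not_le.2 h)
  have hrange := ((not_summable_iff_tendsto_nat_atTop_of_nonneg
    fun n => rpow_nonneg (hd n) α).1 hns).comp (tendsto_add_atTop_nat 1)
  refine (tendsto_atTop_add_const_left _ (-(d 0 ^ α)) hrange).congr fun N => ?_
  simp only [Function.comp_apply, Finset.range_eq_Ico]
  rw [Finset.sum_eq_sum_Ico_succ_bot (Nat.succ_pos N), Nat.succ_eq_add_one,
    Finset.Ico_add_one_right_eq_Icc]
  ring

lemma ae_frequently_lt_of_iIndepFun {Ω : Type*} [MeasurableSpace Ω] {P : Measure Ω}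
    [IsProbabilityMeasure P] {X : ℕ → Ω → ℝ} (hX : ∀ j, Measurable (X j))
    (hind : iIndepFun X P) {c p : ℝ} (hp : 0 < p) (hle : ∀ j, p ≤ P.real {ω | X j ω < c}) :
    ∀ᵐ ω ∂P, ∃ᶠ j in atTop, X j ω < c := by
  set A : ℕ → Set Ω := fun j => {ω | X j ω < c}
  have hA : ∀ j, MeasurableSet (A j) := fun j => measurableSet_lt (hX j) measurable_const
  have hindA : iIndepSet A P := (iIndepSet_iff_meas_biInter hA).2 fun s =>
    iIndepFun_iff_measure_inter_preimage_eq_mul.1 hind s fun _ _ => measurableSet_Iio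
  have hsum : ∑' j, P (A j) = ∞ := top_unique <|
    calc ∞ = ∑' _ : ℕ, ENNReal.ofReal p := (ENNReal.tsum_const_eq_top_of_ne_zero (by simpa)).symm
      _ ≤ ∑' j, P (A j) := ENNReal.tsum_le_tsum fun j => ENNReal.ofReal_le_of_le_toReal (hle j)
  have hlimsup : ∀ᵐ ω ∂P, ω ∈ limsup A atTop :=
    (ae_iff_measure_eq (MeasurableSet.measurableSet_limsup hA).nullMeasurableSet).2
      ((measure_limsup_eq_one hA hindA hsum).trans measure_univ.symm)
  exact hlimsup.mono fun _ => mem_limsup_iff_frequently_mem.1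

namespace IsStableSubordinator

variable {Ω : Type*} [MeasurableSpace Ω] {P : Measure Ω} {β : ℝ} {S : Ω → ℝ → ℝ}

lemma measurable_sub (hS : IsStableSubordinator β P S) (u v : ℝ) :
    Measurable fun ω => S ω u - S ω v :=
  (hS.meas u).sub (hS.meas v)

lemma iIndepFun_increments (hS : IsStableSubordinator β P S) {τ : ℕ → ℝ} (hτ : Monotone τ)
    (hτ0 : 0 ≤ τ 0) : iIndepFun (fun j ω => S ω (τ (j + 1)) - S ω (τ j)) P := by
  refine iIndepFun_iff_finset.2 fun s => ?_
  obtain ⟨N, hN⟩ : ∃ N, ∀ j ∈ s, j < N :=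
    ⟨s.sup id + 1, fun j hj => Nat.lt_succ_of_le (Finset.le_sup (f := id) hj)⟩
  exact (hS.indep N (fun k => τ k) (fun _ _ h => hτ h) hτ0).precomp
    (g := fun j : s => (⟨j, hN j j.2⟩ : Fin N)) fun _ _ h => Subtype.ext (congrArg Fin.val h)

lemma integrable_exp_neg_mul_sub [IsFiniteMeasure P] (hS : IsStableSubordinator β P S)
    {θ : ℝ} (hθ : 0 ≤ θ) {u v : ℝ} (hvu : v ≤ u) :
    Integrable (fun ω => exp (-θ * (S ω u - S ω v))) P := by
  refine .of_bound ((hS.measurable_sub u v).const_mul _).exp.aestronglyMeasurable 1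
    (ae_of_all _ fun ω => ?_)
  have : 0 ≤ S ω u - S ω v := sub_nonneg.2 (hS.mono ω hvu)
  rw [norm_of_nonneg (exp_pos _).le, exp_le_one_iff]
  nlinarith

lemma measureReal_le_le_exp [IsProbabilityMeasure P] (hS : IsStableSubordinator β P S)
    (K : ℝ) {u : ℝ} (hu : 0 ≤ u) : P.real {ω | S ω u ≤ K} ≤ exp (K - u) := by
  have hsub : ∀ ω, S ω u - S ω 0 = S ω u := fun ω => by rw [hS.zero, sub_zero]
  have hmgf : mgf (fun ω => S ω u) P (-1) = exp (-u) := by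
    simpa [mgf, hsub] using hS.laplace 1 zero_le_one 0 u le_rfl hu
  have hint := hS.integrable_exp_neg_mul_sub zero_le_one hu
  simp only [hsub, neg_one_mul] at hint
  calc P.real {ω | S ω u ≤ K} ≤ exp (-(-1) * K) * mgf (fun ω => S ω u) P (-1) :=
        measure_le_le_exp_mul_mgf K (by norm_num) (by simpa using hint)
    _ = exp (K - u) := by rw [hmgf, ← exp_add]; ring_nf

lemma exp_sub_exp_le_measureReal_sub_lt [IsProbabilityMeasure P]
    (hS : IsStableSubordinator β P S) {θ : ℝ} (hθ : 0 ≤ θ) (c : ℝ) {u v : ℝ} (hv : 0 ≤ v)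
    (hvu : v ≤ u) :
    exp (-(u - v) * θ ^ β) - exp (-θ * c) ≤ P.real {ω | S ω u - S ω v < c} := by
  set A := {ω | S ω u - S ω v < c}
  have hA : MeasurableSet A := measurableSet_lt (hS.measurable_sub u v) measurable_const
  have hpt : ∀ ω, exp (-θ * (S ω u - S ω v)) ≤ A.indicator 1 ω + exp (-θ * c) := fun ω => by
    by_cases hω : ω ∈ A
    · have : 0 ≤ S ω u - S ω v := sub_nonneg.2 (hS.mono ω hvu)
      rw [Set.indicator_of_mem hω, Pi.one_apply]
      have : exp (-θ * (S ω u - S ω v)) ≤ 1 := exp_le_one_iff.2 (by nlinarith)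
      linarith [exp_pos (-θ * c)]
    · rw [Set.indicator_of_notMem hω, zero_add, exp_le_exp]
      have : c ≤ S ω u - S ω v := le_of_not_gt hω
      nlinarith
  have hmono := integral_mono (hS.integrable_exp_neg_mul_sub hθ hvu)
    (((integrable_const 1).indicator hA).add (integrable_const _)) hpt
  simp only [Pi.add_apply] at hmono
  rw [hS.laplace θ hθ v u hv hvu, integral_add ((integrable_const 1).indicator hA)
    (integrable_const _), integral_indicator_one hA, integral_const] at hmono
  simp only [probReal_univ, smul_eq_mul, one_mul] at hmono
  linarith

lemma ae_tendsto_atTop [IsProbabilityMeasure P] (hS : IsStableSubordinator β P S) :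
    ∀ᵐ ω ∂P, Tendsto (S ω) atTop atTop := by
  have hbounded_null : ∀ K : ℕ, P.real (⋂ j : ℕ, {ω | S ω j ≤ K}) = 0 := fun K => by
    have hlim : Tendsto (fun j : ℕ => exp (K - j)) atTop (𝓝 0) :=
      tendsto_exp_atBot.comp (tendsto_atBot_add_const_left _ _
        (tendsto_neg_atTop_atBot.comp tendsto_natCast_atTop_atTop))
    refine le_antisymm (ge_of_tendsto' hlim fun j => ?_) measureReal_nonneg
    exact (measureReal_mono (Set.iInter_subset _ j)).trans
      (hS.measureReal_le_le_exp K j.cast_nonneg)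
  have hunb : ∀ᵐ ω ∂P, ∀ K : ℕ, ∃ j : ℕ, (K : ℝ) < S ω j := ae_all_iff.2 fun K => by
    rw [ae_iff]
    convert (measureReal_eq_zero_iff (μ := P)).1 (hbounded_null K) using 2
    ext
    simp
  filter_upwards [hunb] with ω hω
  refine tendsto_atTop_atTop_of_monotone (hS.mono ω) fun b => ?_
  obtain ⟨j, hj⟩ := hω ⌈b⌉₊
  exact ⟨j, (Nat.le_ceil b).trans hj.le⟩

lemma ae_frequently_two_step_increment_lt_one [IsProbabilityMeasure P]
    (hS : IsStableSubordinator β P S) (hβ1 : β < 1) :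
    ∀ᵐ ω ∂P, ∃ᶠ j : ℕ in atTop, S ω (2 * (j + 1 : ℕ)) - S ω (2 * j) < 1 := by
  obtain ⟨θ, hθ0, hθ⟩ : ∃ θ : ℝ, 0 ≤ θ ∧ 2 * θ ^ β < θ := by
    set θ : ℝ := 3 ^ (1 - β)⁻¹
    have hθpos : 0 < θ := by positivity
    have h3 : θ ^ (1 - β) = 3 := by
      rw [← rpow_mul (by norm_num), inv_mul_cancel₀ (by linarith), rpow_one]
    have : θ = θ ^ β * 3 := by rw [← h3, ← rpow_add hθpos, add_sub_cancel, rpow_one]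
    exact ⟨θ, hθpos.le, by nlinarith [rpow_pos_of_pos hθpos β]⟩
  refine ae_frequently_lt_of_iIndepFun (fun j => hS.measurable_sub _ _)
    (hS.iIndepFun_increments (τ := fun j : ℕ => 2 * (j : ℝ))
      (fun _ _ h => by simpa using h) (by simp))
    (p := exp (-2 * θ ^ β) - exp (-θ)) (sub_pos.2 (exp_lt_exp.2 (by linarith))) fun j => ?_
  convert hS.exp_sub_exp_le_measureReal_sub_lt hθ0 1 (u := 2 * (j + 1 : ℕ)) (v := 2 * j)
    (by positivity) (by gcongr; simp) using 1
  push_cast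
  ring_nf

end IsStableSubordinator

lemma tendsto_sum_invProc_increments_rpow_atTop {Ω : Type*} {S : Ω → ℝ → ℝ} {ω : Ω}
    (hmono : Monotone (S ω)) (hzero : S ω 0 = 0) (htop : Tendsto (S ω) atTop atTop)
    (hsmall : ∃ᶠ j : ℕ in atTop, S ω (2 * (j + 1 : ℕ)) - S ω (2 * j) < 1)
    {α : ℝ} (hα : 0 ≤ α) (x : ℝ) :
    Tendsto (fun N : ℕ => ∑ n ∈ Finset.Icc 1 N,
      (invProc S ω (max ((n : ℝ) + 1 - x) 0) - invProc S ω (max ((n : ℝ) - x) 0)) ^ α)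
      atTop atTop := by
  set d : ℕ → ℝ := fun n =>
    invProc S ω (max ((n : ℝ) + 1 - x) 0) - invProc S ω (max ((n : ℝ) - x) 0)
  have hd : ∀ n, 0 ≤ d n := fun n =>
    sub_nonneg.2 (invProc_mono_s3 htop (max_le_max_right 0 (by linarith)))
  refine tendsto_sum_Icc_rpow_atTop_of_frequently_one_le hα hd (frequently_atTop.2 fun N => ?_)
  have hlarge : ∀ᶠ j : ℕ in atTop, (N : ℝ) + 1 ≤ x + S ω (2 * j) :=
    (tendsto_atTop_add_const_left _ x (htop.comp (tendsto_natCast_atTop_atTop.const_mul_atTop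
      two_pos))).eventually_ge_atTop _
  obtain ⟨j, hj, hjN⟩ := (hsmall.and_eventually hlarge).exists
  set m := ⌊x + S ω (2 * j)⌋₊
  have hfloor := Nat.floor_le (a := x + S ω (2 * j)) (by linarith)
  have htwo : 2 ≤ d m + d (m + 1) := by
    have hS0 : 0 ≤ S ω (2 * j) := hzero ▸ hmono (by positivity : (0 : ℝ) ≤ 2 * j)
    have := sub_le_invProc_sub hmono htop (a := m - x) (b := m + 2 - x) (u := 2 * j)
      (v := 2 * (j + 1 : ℕ)) (by positivity) (max_le (by linarith) hS0)
      (by linarith [Nat.lt_floor_add_one (x + S ω (2 * j))])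
    simp only [d]
    push_cast at this ⊢
    ring_nf at this ⊢
    linarith
  by_cases hm : 1 ≤ d m
  · exact ⟨m, Nat.le_floor (by linarith), hm⟩
  · exact ⟨m + 1, (Nat.le_floor (by linarith)).trans m.le_succ, by linarith⟩

theorem mittagLeffler_increments_alpha_sum_diverges_general
    {Ω : Type*} [MeasurableSpace Ω] (P : Measure Ω) [IsProbabilityMeasure P]
    (α β : ℝ) (hα0 : 0 < α) (hβ1 : β < 1)
    (S : Ω → ℝ → ℝ) (hS : IsStableSubordinator β P S) :
    ∀ᵐ q ∂(P.prod (nuMeasure β)),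
      Tendsto
        (fun N : ℕ => ∑ n ∈ Finset.Icc 1 N,
          (invProc S q.1 (max ((n : ℝ) + 1 - q.2) 0)
            - invProc S q.1 (max ((n : ℝ) - q.2) 0)) ^ α)
        atTop atTop := by
  have hpaths := hS.ae_tendsto_atTop.and (hS.ae_frequently_two_step_increment_lt_one hβ1)
  filter_upwards [Measure.quasiMeasurePreserving_fst.ae hpaths] with q ⟨hunb, hsmall⟩
  exact tendsto_sum_invProc_increments_rpow_atTop (hS.mono q.1) (hS.zero q.1) hunb hsmall
    hα0.le q.2

/-- For `(P' × ν)`-almost every `(ω, x)`, the series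
`Σ_n (M_β((n+1-x)_+) - M_β((n-x)_+))^α` diverges to infinity. -/
theorem mittagLeffler_increments_alpha_sum_diverges
    {Ω : Type*} [MeasurableSpace Ω] (P : Measure Ω) [IsProbabilityMeasure P]
    (α β : ℝ) (hα0 : 0 < α) (hα2 : α < 2) (hβ0 : 0 < β) (hβ1 : β < 1)
    (S : Ω → ℝ → ℝ) (hS : IsStableSubordinator β P S) :
    ∀ᵐ q ∂(P.prod (nuMeasure β)),
      Tendsto
        (fun N : ℕ => ∑ n ∈ Finset.Icc 1 N,
          (invProc S q.1 (max ((n : ℝ) + 1 - q.2) 0)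
            - invProc S q.1 (max ((n : ℝ) - q.2) 0)) ^ α)
        atTop atTop :=
  mittagLeffler_increments_alpha_sum_diverges_general P α β hα0 hβ1 S hS
end

section
/- For every β∈(0,1), the series Σ_{m=1}^∞ ( Γ(1+mβ) / m! )^{1/(2m)} diverges to infinity. -/
/-!
Each term is at least `1 / (2m)`: `Γ(1 + mβ) ≥ 1/2` because `1 + mβ ≥ 1`, and
`2 · m! ≤ (2m)^(2m)`. Hence the partial sums dominate half the harmonic numbers, which
diverge.
-/

open Filter Finset

lemma Real.half_le_Gamma {x : ℝ} (hx : 1 ≤ x) : 1 / 2 ≤ Real.Gamma x := by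
  have hmono := Real.Gamma_strictMonoOn_Ici.monotoneOn
  rcases le_total 2 x with h2 | h2
  · have := hmono (Set.mem_Ici.2 le_rfl) h2 h2
    rw [Real.Gamma_two] at this
    linarith
  · -- on `[1, 2]`, `x Γ(x) = Γ(x + 1) ≥ Γ(2) = 1`
    have hx0 : 0 < x := by linarith
    have hsucc : 1 ≤ Real.Gamma (x + 1) := by
      simpa [Real.Gamma_two] using hmono (Set.mem_Ici.2 le_rfl) (by simp; linarith) (by linarith)
    rw [Real.Gamma_add_one hx0.ne'] at hsucc
    nlinarith [Real.Gamma_pos_of_pos hx0]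

lemma Nat.two_mul_factorial_le_pow {m : ℕ} (hm : m ≠ 0) :
    2 * m.factorial ≤ (2 * m) ^ (2 * m) :=
  calc 2 * m.factorial ≤ 2 ^ m * m ^ m :=
        Nat.mul_le_mul (Nat.le_self_pow hm 2) (Nat.factorial_le_pow m)
    _ = (2 * m) ^ m := (mul_pow 2 m m).symm
    _ ≤ (2 * m) ^ (2 * m) := Nat.pow_le_pow_right (by omega) (by omega)

lemma one_div_two_mul_le_div_factorial_rpow {a : ℝ} (ha : 1 / 2 ≤ a) {m : ℕ} (hm : m ≠ 0) :
    1 / (2 * (m : ℝ)) ≤ (a / m.factorial) ^ (1 / (2 * (m : ℝ))) := by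
  have hfac : (0 : ℝ) < m.factorial := by positivity
  have hpow : 2 * (m.factorial : ℝ) ≤ (2 * m) ^ (2 * m) := by
    exact_mod_cast Nat.two_mul_factorial_le_pow hm
  rw [one_div (2 * (m : ℝ)),
    Real.le_rpow_inv_iff_of_pos (by positivity) (by positivity) (by positivity),
    show (2 * (m : ℝ)) = ((2 * m : ℕ) : ℝ) by push_cast; ring, Real.rpow_natCast, inv_pow,
    le_div_iff₀ hfac]
  push_cast
  rw [inv_mul_le_iff₀ (by positivity)]
  nlinarith

lemma tendsto_sum_Icc_one_div_two_mul_atTop :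
    Tendsto (fun N : ℕ => ∑ m ∈ Icc 1 N, 1 / (2 * (m : ℝ))) atTop atTop := by
  have hharm : Tendsto (fun N : ℕ => (harmonic N : ℝ)) atTop atTop :=
    tendsto_atTop_mono log_add_one_le_harmonic <|
      Real.tendsto_log_atTop.comp (tendsto_natCast_atTop_atTop.comp (tendsto_add_atTop_nat 1))
  refine (hharm.atTop_div_const two_pos).congr fun N => ?_
  simp only [harmonic_eq_sum_Icc, Rat.cast_sum, Rat.cast_inv, Rat.cast_natCast, sum_div]
  exact sum_congr rfl fun m _ => by ring

theorem carleman_mittagLeffler_general (β : ℝ) (hβ0 : 0 < β) :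
    Tendsto
      (fun N : ℕ => ∑ m ∈ Finset.Icc 1 N,
        (Real.Gamma (1 + (m : ℝ) * β) / (Nat.factorial m : ℝ)) ^ (1 / (2 * (m : ℝ))))
      atTop atTop := by
  refine tendsto_atTop_mono (fun N => sum_le_sum fun m hm => ?_)
    tendsto_sum_Icc_one_div_two_mul_atTop
  have hm0 : m ≠ 0 := by grind
  exact one_div_two_mul_le_div_factorial_rpow
    (Real.half_le_Gamma (le_add_of_nonneg_right (by positivity))) hm0

/-- Carleman's condition for the Mittag-Leffler distribution: for every
`β ∈ (0,1)`, the series `Σ_m (Γ(1+mβ)/m!)^{1/(2m)}` diverges to infinity. -/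
theorem carleman_mittagLeffler (β : ℝ) (hβ0 : 0 < β) (hβ1 : β < 1) :
    Tendsto
      (fun N : ℕ => ∑ m ∈ Finset.Icc 1 N,
        (Real.Gamma (1 + (m : ℝ) * β) / (Nat.factorial m : ℝ)) ^ (1 / (2 * (m : ℝ))))
      atTop atTop :=
  carleman_mittagLeffler_general β hβ0
end

section
/- Let T be an ergodic conservative measure-preserving map of an infinite σ-finite measure space (E,ℰ,μ), and let A be a Darling–Kac set for T with normalizing sequence (a_n). Then (1/a_n) Σ_{k=1}^n μ(A ∩ T^{-k}A) → μ(A)² as n→∞. -/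
open MeasureTheory ProbabilityTheory Filter
open scoped ENNReal

/-- The dual operator `T̂` acting on nonnegative (ℝ≥0∞-valued) functions:
`T̂ f` is the Radon–Nikodym derivative with respect to `μ` of the pushforward
under `T` of the measure with density `f` with respect to `μ`. -/
noncomputable def dualPos {E : Type*} [MeasurableSpace E] (T : E → E) (μ : Measure E)
    (f : E → ℝ≥0∞) : E → ℝ≥0∞ :=
  Measure.rnDeriv (Measure.map T (μ.withDensity f)) μ

/-- The dual operator `T̂` acting on real-valued functions, extended from
nonnegative functions by linearity. -/
noncomputable def dualOp {E : Type*} [MeasurableSpace E] (T : E → E) (μ : Measure E)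
    (f : E → ℝ) : E → ℝ :=
  fun x => (dualPos T μ (fun y => ENNReal.ofReal (f y)) x).toReal
    - (dualPos T μ (fun y => ENNReal.ofReal (-f y)) x).toReal

/-- `T` is pointwise dual ergodic with normalizing sequence `a`:
`a_n → ∞` and `(1/a_n) Σ_{k=1}^n T̂^k f → ∫ f dμ` μ-a.e. for every `f ∈ L¹(μ)`. -/
def PointwiseDualErgodic {E : Type*} [MeasurableSpace E] (T : E → E) (μ : Measure E)
    (a : ℕ → ℝ) : Prop :=
  Filter.Tendsto a Filter.atTop Filter.atTop ∧
  ∀ f : E → ℝ, Integrable f μ →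
    ∀ᵐ x ∂μ, Filter.Tendsto
      (fun n : ℕ => (a n)⁻¹ * ∑ k ∈ Finset.Icc 1 n, (dualOp T μ)^[k] f x)
      Filter.atTop (nhds (∫ y, f y ∂μ))

/-- A sequence of positive reals is regularly varying with exponent `β`. -/
def RegularlyVarying (a : ℕ → ℝ) (β : ℝ) : Prop :=
  (∀ n : ℕ, 1 ≤ n → 0 < a n) ∧
  ∀ lam : ℝ, 0 < lam →
    Filter.Tendsto (fun n : ℕ => a ⌈lam * (n : ℝ)⌉₊ / a n) Filter.atTop (nhds (lam ^ β))

/-- `A` is a Darling–Kac set for `T` with normalizing sequence `a`: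
`0 < μ(A) < ∞` and `(1/a_n) Σ_{k=1}^n T̂^k 1_A → μ(A)` uniformly on a measurable
subset of `A` of full measure in `A`. -/
def DarlingKacSet {E : Type*} [MeasurableSpace E] (T : E → E) (μ : Measure E)
    (a : ℕ → ℝ) (A : Set E) : Prop :=
  MeasurableSet A ∧ 0 < μ A ∧ μ A < ⊤ ∧
  Filter.Tendsto a Filter.atTop Filter.atTop ∧
  ∃ B ⊆ A, MeasurableSet B ∧ μ B = μ A ∧
    TendstoUniformlyOn
      (fun (n : ℕ) (x : E) => (a n)⁻¹ * ∑ k ∈ Finset.Icc 1 n, (dualOp T μ)^[k] (A.indicator 1) x)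
      (fun _ => (μ A).toReal) Filter.atTop B

/-- `A` is a uniform set for the nonnegative integrable function `g`:
`(1/a_n) Σ_{k=1}^n T̂^k g → ∫ g dμ` uniformly on a measurable subset of `A`
of full measure in `A`. -/
def UniformSet {E : Type*} [MeasurableSpace E] (T : E → E) (μ : Measure E)
    (a : ℕ → ℝ) (A : Set E) (g : E → ℝ) : Prop :=
  ∃ B ⊆ A, MeasurableSet B ∧ μ B = μ A ∧
    TendstoUniformlyOn
      (fun (n : ℕ) (x : E) => (a n)⁻¹ * ∑ k ∈ Finset.Icc 1 n, (dualOp T μ)^[k] g x)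
      (fun _ => ∫ y, g y ∂μ) Filter.atTop B

/-- The first entrance time `φ(x) = inf{n ≥ 1 : T^n x ∈ A}`, with value `⊤`
if the orbit of `x` never enters `A`. -/
noncomputable def firstEntrance {E : Type*} (T : E → E) (A : Set E) (x : E) : ℕ∞ :=
  sInf {n : ℕ∞ | ∃ m : ℕ, n = m ∧ 1 ≤ m ∧ T^[m] x ∈ A}

/-- The sequence of sets `A_0 = A`, `A_k = Aᶜ ∩ {φ = k}` for `k ≥ 1`. -/
noncomputable def entranceSets {E : Type*} (T : E → E) (A : Set E) : ℕ → Set E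
  | 0 => A
  | (k + 1) => Aᶜ ∩ {x | firstEntrance T A x = ((k + 1 : ℕ) : ℕ∞)}

/-- Condition (strongDK): there is a measurable nonnegative `K` with
`T̂^n 1_{A_n} / μ(A_n) → K` uniformly on a measurable subset of `A` of full
measure in `A`. -/
def StrongDK {E : Type*} [MeasurableSpace E] (T : E → E) (μ : Measure E)
    (A : Set E) : Prop :=
  ∃ K : E → ℝ, Measurable K ∧ (∀ x, 0 ≤ K x) ∧
    ∃ B ⊆ A, MeasurableSet B ∧ μ B = μ A ∧
      TendstoUniformlyOn
        (fun (n : ℕ) (x : E) =>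
          (dualOp T μ)^[n] ((entranceSets T A n).indicator 1) x /
            (μ (entranceSets T A n)).toReal)
        K Filter.atTop B

/-- The ergodic sums `S_n(f) = Σ_{k=1}^n f ∘ T^k`. -/
noncomputable def ergSum {E : Type*} (T : E → E) (f : E → ℝ) (n : ℕ) (x : E) : ℝ :=
  ∑ k ∈ Finset.Icc 1 n, f (T^[k] x)

/-- The wandering rate `w_n = μ(∪_{k=0}^{n-1} T^{-k} A)`. -/
noncomputable def wanderingRate {E : Type*} [MeasurableSpace E] (T : E → E)
    (μ : Measure E) (A : Set E) (n : ℕ) : ℝ≥0∞ :=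
  μ (⋃ k ∈ Finset.range n, T^[k] ⁻¹' A)

/-!
Because `T` preserves `μ`, the dual operator is the transfer operator:
`∫_S T̂^k 1_A dμ = μ(A ∩ T^{-k} S)`. Integrating the Darling–Kac averages
`(1/a_n) Σ_{k ≤ n} T̂^k 1_A` over the full-measure subset `B` of `A` therefore yields exactly the
normalized correlation sums, and uniform convergence on the finite-measure set `B` passes to the
integrals, whose limit is `μ(B) μ(A) = μ(A)²`.
-/

lemma tendsto_setIntegral_of_tendstoUniformlyOn {α G ι : Type*} [MeasurableSpace α]
    [NormedAddCommGroup G] [NormedSpace ℝ G] {μ : Measure α} {l : Filter ι}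
    [l.IsCountablyGenerated] {F : ι → α → G} {f : α → G} {s : Set α} (hs : MeasurableSet s)
    (hμs : μ s ≠ ⊤) (hF : ∀ᶠ i in l, AEStronglyMeasurable (F i) (μ.restrict s))
    (hf : IntegrableOn f s μ) (h : TendstoUniformlyOn F f l s) :
    Tendsto (fun i => ∫ x in s, F i x ∂μ) l (nhds (∫ x in s, f x ∂μ)) := by
  refine tendsto_integral_filter_of_dominated_convergence (fun x => ‖f x‖ + 1) hF ?_
    (hf.norm.add (integrableOn_const hμs))
    (ae_restrict_of_forall_mem hs fun x hx => h.tendsto_at hx)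
  filter_upwards [Metric.tendstoUniformlyOn_iff.mp h 1 one_pos] with i hi
  refine ae_restrict_of_forall_mem hs fun x hx => ?_
  have hclose : ‖F i x - f x‖ < 1 := by rw [← dist_eq_norm, dist_comm]; exact hi x hx
  linarith [norm_le_norm_add_norm_sub' (F i x) (f x)]

section DualOperator

variable {E : Type*} [MeasurableSpace E] {μ : Measure E} {T : E → E}

lemma dualPos_congr_ae {f g : E → ℝ≥0∞} (h : f =ᵐ[μ] g) : dualPos T μ f = dualPos T μ g := by
  rw [dualPos, withDensity_congr_ae h, dualPos]

lemma dualOp_congr_ae {f g : E → ℝ} (h : f =ᵐ[μ] g) : dualOp T μ f = dualOp T μ g := by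
  have hpos : (fun y => ENNReal.ofReal (f y)) =ᵐ[μ] fun y => ENNReal.ofReal (g y) :=
    h.mono fun x hx => by simp only [hx]
  have hneg : (fun y => ENNReal.ofReal (-f y)) =ᵐ[μ] fun y => ENNReal.ofReal (-g y) :=
    h.mono fun x hx => by simp only [hx]
  unfold dualOp
  rw [dualPos_congr_ae hpos, dualPos_congr_ae hneg]

lemma dualPos_zero_ae : dualPos T μ 0 =ᵐ[μ] 0 := by
  rw [dualPos, withDensity_zero, Measure.map_zero]
  exact Measure.rnDeriv_zero μ

lemma dualOp_toReal_ae {f : E → ℝ≥0∞} (hf : ∀ᵐ x ∂μ, f x ≠ ⊤) :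
    dualOp T μ (fun x => (f x).toReal) =ᵐ[μ] fun x => (dualPos T μ f x).toReal := by
  have hpos : dualPos T μ (fun x => ENNReal.ofReal (f x).toReal) = dualPos T μ f :=
    dualPos_congr_ae (hf.mono fun x hx => ENNReal.ofReal_toReal hx)
  have hneg : (fun x => ENNReal.ofReal (-(f x).toReal)) = 0 :=
    funext fun x => ENNReal.ofReal_of_nonpos (neg_nonpos.mpr ENNReal.toReal_nonneg)
  filter_upwards [dualPos_zero_ae (T := T) (μ := μ)] with x hx
  simp only [dualOp, hpos, hneg, hx, Pi.zero_apply, ENNReal.toReal_zero, sub_zero]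

lemma iterate_dualOp_toReal_ae {f : E → ℝ≥0∞}
    (hf : ∀ k, ∀ᵐ x ∂μ, (dualPos T μ)^[k] f x ≠ ⊤) (k : ℕ) :
    (dualOp T μ)^[k] (fun x => (f x).toReal) =ᵐ[μ]
      fun x => ((dualPos T μ)^[k] f x).toReal := by
  induction k with
  | zero => rfl
  | succ k ih =>
    rw [Function.iterate_succ_apply', Function.iterate_succ_apply', dualOp_congr_ae ih]
    exact dualOp_toReal_ae (hf k)

lemma measurable_iterate_dualPos {f : E → ℝ≥0∞} (hf : Measurable f) (k : ℕ) :
    Measurable ((dualPos T μ)^[k] f) := by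
  cases k with
  | zero => exact hf
  | succ k =>
    rw [Function.iterate_succ_apply']
    exact Measure.measurable_rnDeriv _ _

end DualOperator

section MeasurePreserving

variable {E : Type*} [MeasurableSpace E] {μ : Measure E} [SigmaFinite μ] {T : E → E}

lemma withDensity_dualPos (hT : MeasurePreserving T μ μ) (f : E → ℝ≥0∞) :
    μ.withDensity (dualPos T μ f) = Measure.map T (μ.withDensity f) := by
  have hac : Measure.map T (μ.withDensity f) ≪ μ :=
    (withDensity_absolutelyContinuous μ f).map hT.measurable |>.trans hT.map_eq.absolutelyContinuous
  exact Measure.withDensity_rnDeriv_eq _ _ hac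

lemma setLIntegral_dualPos (hT : MeasurePreserving T μ μ) {f : E → ℝ≥0∞}
    {S : Set E} (hS : MeasurableSet S) :
    ∫⁻ x in S, dualPos T μ f x ∂μ = ∫⁻ x in T ⁻¹' S, f x ∂μ := by
  rw [← withDensity_apply _ hS, withDensity_dualPos hT,
    Measure.map_apply hT.measurable hS, withDensity_apply _ (hT.measurable hS)]

lemma setLIntegral_iterate_dualPos (hT : MeasurePreserving T μ μ) {f : E → ℝ≥0∞}
    (k : ℕ) {S : Set E} (hS : MeasurableSet S) :
    ∫⁻ x in S, (dualPos T μ)^[k] f x ∂μ = ∫⁻ x in T^[k] ⁻¹' S, f x ∂μ := by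
  induction k generalizing S with
  | zero => rfl
  | succ k ih =>
    rw [Function.iterate_succ_apply', setLIntegral_dualPos hT hS, ih (hT.measurable hS),
      ← Set.preimage_comp, ← Function.iterate_succ']

lemma lintegral_iterate_dualPos (hT : MeasurePreserving T μ μ) (f : E → ℝ≥0∞) (k : ℕ) :
    ∫⁻ x, (dualPos T μ)^[k] f x ∂μ = ∫⁻ x, f x ∂μ := by
  simpa using setLIntegral_iterate_dualPos hT (f := f) k MeasurableSet.univ

variable {A : Set E}

lemma ae_iterate_dualPos_indicator_lt_top (hT : MeasurePreserving T μ μ) (hA : MeasurableSet A)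
    (hAfin : μ A ≠ ⊤) (k : ℕ) : ∀ᵐ x ∂μ, (dualPos T μ)^[k] (A.indicator 1) x < ⊤ := by
  refine ae_lt_top (measurable_iterate_dualPos (measurable_one.indicator hA) k) ?_
  rwa [lintegral_iterate_dualPos hT, lintegral_indicator_one hA]

lemma iterate_dualOp_indicator_ae (hT : MeasurePreserving T μ μ) (hA : MeasurableSet A)
    (hAfin : μ A ≠ ⊤) (k : ℕ) :
    (dualOp T μ)^[k] (A.indicator 1) =ᵐ[μ]
      fun x => ((dualPos T μ)^[k] (A.indicator 1) x).toReal := by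
  have hind : A.indicator (1 : E → ℝ) = fun x => (A.indicator (1 : E → ℝ≥0∞) x).toReal := by
    funext x
    by_cases hx : x ∈ A <;> simp [hx]
  rw [hind]
  exact iterate_dualOp_toReal_ae
    (fun j => (ae_iterate_dualPos_indicator_lt_top hT hA hAfin j).mono fun _ hx => hx.ne) k

lemma integrable_iterate_dualOp_indicator (hT : MeasurePreserving T μ μ) (hA : MeasurableSet A)
    (hAfin : μ A ≠ ⊤) (k : ℕ) : Integrable ((dualOp T μ)^[k] (A.indicator 1)) μ := by
  refine (integrable_toReal_of_lintegral_ne_top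
    (measurable_iterate_dualPos (measurable_one.indicator hA) k).aemeasurable ?_).congr
    (iterate_dualOp_indicator_ae hT hA hAfin k).symm
  rwa [lintegral_iterate_dualPos hT, lintegral_indicator_one hA]

lemma setIntegral_iterate_dualOp_indicator (hT : MeasurePreserving T μ μ) (hA : MeasurableSet A)
    (hAfin : μ A ≠ ⊤) (k : ℕ) {S : Set E} (hS : MeasurableSet S) :
    ∫ x in S, (dualOp T μ)^[k] (A.indicator 1) x ∂μ = (μ (A ∩ T^[k] ⁻¹' S)).toReal := by
  rw [integral_congr_ae (ae_restrict_of_ae (iterate_dualOp_indicator_ae hT hA hAfin k)),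
    integral_toReal (measurable_iterate_dualPos (measurable_one.indicator hA) k).aemeasurable
      (ae_restrict_of_ae (ae_iterate_dualPos_indicator_lt_top hT hA hAfin k)),
    setLIntegral_iterate_dualPos hT k hS, lintegral_indicator_one hA,
    Measure.restrict_apply hA]

end MeasurePreserving

theorem darlingKac_correlation_sums_general
    {E : Type*} [MeasurableSpace E] (μ : Measure E) [SigmaFinite μ]
    (T : E → E) (hT : MeasurePreserving T μ μ)
    (a : ℕ → ℝ) (A : Set E) (hDK : DarlingKacSet T μ a A) :
    Tendsto
      (fun n : ℕ => (a n)⁻¹ * ∑ k ∈ Finset.Icc 1 n, (μ (A ∩ T^[k] ⁻¹' A)).toReal)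
      atTop (nhds ((μ A).toReal ^ 2)) := by
  obtain ⟨hA, -, hAfin, -, B, hBA, hB, hμB, hunif⟩ := hDK
  have hBA_ae : B =ᵐ[μ] A :=
    ae_eq_of_subset_of_measure_ge hBA hμB.ge hB.nullMeasurableSet hAfin.ne
  have hint := integrable_iterate_dualOp_indicator hT hA hAfin.ne
  have hlim := tendsto_setIntegral_of_tendstoUniformlyOn hB (hμB ▸ hAfin.ne)
    (Eventually.of_forall fun n =>
      ((integrable_finsetSum _ fun k _ => hint k).const_mul _).aestronglyMeasurable.restrict)
    (integrableOn_const (hμB ▸ hAfin.ne)) hunif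
  convert hlim using 2 with n
  · rw [integral_const_mul, integral_finsetSum _ fun k _ => (hint k).integrableOn]
    simp only [setIntegral_congr_set hBA_ae,
      setIntegral_iterate_dualOp_indicator hT hA hAfin.ne _ hA]
  · rw [setIntegral_const, Measure.real, hμB, smul_eq_mul, sq]

/-- For a Darling–Kac set `A` of an ergodic conservative measure-preserving map
`T` of an infinite σ-finite measure space, `(1/a_n) Σ_{k=1}^n μ(A ∩ T^{-k}A) → μ(A)²`. -/
theorem darlingKac_correlation_sums
    {E : Type*} [MeasurableSpace E] (μ : Measure E) [SigmaFinite μ]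
    (hInf : μ Set.univ = ⊤)
    (T : E → E) (hT : MeasurePreserving T μ μ) (hcons : Conservative T μ)
    (herg : Ergodic T μ)
    (a : ℕ → ℝ) (A : Set E) (hDK : DarlingKacSet T μ a A) :
    Tendsto
      (fun n : ℕ => (a n)⁻¹ * ∑ k ∈ Finset.Icc 1 n, (μ (A ∩ T^[k] ⁻¹' A)).toReal)
      atTop (nhds ((μ A).toReal ^ 2)) :=
  darlingKac_correlation_sums_general μ T hT a A hDK
end

section
/- Let T be an ergodic conservative measure-preserving map of an infinite σ-finite measure space (E,ℰ,μ), and let A be a Darling–Kac set for T whose normalizing sequence (a_n) is regularly varying with exponent β∈(0,1). Let f∈L²(μ) vanish outside A, and assume A is a uniform set for |f|. Let φ be the first entrance time to A and S_n(f)=Σ_{k=1}^n f∘T^k. Then sup_{n≥1} ( a_n² μ({φ ≤ n}) )^{-1} ∫_E S_n(f)² dμ < ∞. -/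
/-!
Expanding the square bounds `∫ S_n(g)²` by `2n ∑_{m ≤ n} ∫ g · g ∘ T^m`; by duality the
correlations with `m ≥ 1` add up to `∫ g · ∑_{m=1}^n T̂^m g`, which is `O(a_n)` when `A` is a
uniform set for `g`. Hence `∫ S_n(|f|)² = O(n a_n)`. For `g = 1_A` the same bound, combined with
Cauchy–Schwarz on the support `⋃_{k<n} T^{-k} A` of `S_n(1_A)`, gives `n μ(A)² = O(a_n w_n)` for
the wandering rate `w_n`. Together, `∫ S_n(f)² = O(a_n² w_n)`, and `w_n ≤ μ(φ ≤ n)`.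
-/

open MeasureTheory ProbabilityTheory Filter
open scoped ENNReal

open Finset Function

section DualOperator

variable {E : Type*} [MeasurableSpace E] {μ : Measure E} {T : E → E}

theorem measurable_dualOp (T : E → E) (μ : Measure E) (h : E → ℝ) :
    Measurable (dualOp T μ h) :=
  (Measure.measurable_rnDeriv _ _).ennreal_toReal.sub
    (Measure.measurable_rnDeriv _ _).ennreal_toReal

theorem measurable_dualOp_iterate {g : E → ℝ} (hg : Measurable g) :
    ∀ m, Measurable ((dualOp T μ)^[m] g)
  | 0 => hg
  | m + 1 => by rw [iterate_succ_apply']; exact measurable_dualOp T μ _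

theorem dualOp_ae_eq_of_nonneg {h : E → ℝ} (h0 : 0 ≤ᵐ[μ] h) :
    dualOp T μ h =ᵐ[μ] fun x => (dualPos T μ (fun y => ENNReal.ofReal (h y)) x).toReal := by
  have hneg : μ.withDensity (fun y => ENNReal.ofReal (-h y)) = 0 := by
    rw [← withDensity_zero]
    refine withDensity_congr_ae ?_
    filter_upwards [h0] with x hx
    simpa using hx
  have : dualPos T μ (fun y => ENNReal.ofReal (-h y)) =ᵐ[μ] 0 := by
    rw [dualPos, hneg, Measure.map_zero]
    exact Measure.rnDeriv_zero μ
  filter_upwards [this] with x hx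
  simp [dualOp, hx]

theorem ofReal_dualOp_ae_eq_dualPos {h : E → ℝ} (h0 : 0 ≤ᵐ[μ] h)
    (hfin : ∫⁻ x, ENNReal.ofReal (h x) ∂μ ≠ ⊤) :
    (fun x => ENNReal.ofReal (dualOp T μ h x)) =ᵐ[μ]
      dualPos T μ (fun y => ENNReal.ofReal (h y)) := by
  have : IsFiniteMeasure (μ.withDensity fun y => ENNReal.ofReal (h y)) :=
    isFiniteMeasure_withDensity hfin
  have : IsFiniteMeasure (Measure.map T (μ.withDensity fun y => ENNReal.ofReal (h y))) :=
    Measure.isFiniteMeasure_map _ _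
  filter_upwards [dualOp_ae_eq_of_nonneg h0, Measure.rnDeriv_lt_top
    (Measure.map T (μ.withDensity fun y => ENNReal.ofReal (h y))) μ] with x hx hlt
  rw [hx]
  exact ENNReal.ofReal_toReal hlt.ne

variable [SigmaFinite μ]

theorem lintegral_dualPos_mul (hT : MeasurePreserving T μ μ) {H : E → ℝ≥0∞}
    (hH : Measurable H) (hHfin : ∫⁻ x, H x ∂μ ≠ ⊤) {u : E → ℝ≥0∞} (hu : Measurable u) :
    ∫⁻ x, dualPos T μ H x * u x ∂μ = ∫⁻ x, H x * u (T x) ∂μ := by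
  have : IsFiniteMeasure (μ.withDensity H) := isFiniteMeasure_withDensity hHfin
  have hac : Measure.map T (μ.withDensity H) ≪ μ := by
    simpa only [hT.map_eq] using (withDensity_absolutelyContinuous μ H).map hT.measurable
  calc ∫⁻ x, dualPos T μ H x * u x ∂μ
      = ∫⁻ x, u x ∂μ.withDensity (dualPos T μ H) :=
        (lintegral_withDensity_eq_lintegral_mul μ (Measure.measurable_rnDeriv _ _) hu).symm
    _ = ∫⁻ x, u x ∂Measure.map T (μ.withDensity H) := by
        rw [dualPos, Measure.withDensity_rnDeriv_eq _ _ hac]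
    _ = ∫⁻ x, H x * u (T x) ∂μ := by
        rw [lintegral_map hu hT.measurable]
        exact lintegral_withDensity_eq_lintegral_mul μ hH (hu.comp hT.measurable)

theorem ae_nonneg_dualOp_iterate_and_lintegral_mul (hT : MeasurePreserving T μ μ) {g : E → ℝ}
    (hg : Measurable g) (hg0 : 0 ≤ᵐ[μ] g) (hgfin : ∫⁻ x, ENNReal.ofReal (g x) ∂μ ≠ ⊤) (m : ℕ) :
    0 ≤ᵐ[μ] (dualOp T μ)^[m] g ∧ ∀ u : E → ℝ≥0∞, Measurable u →
      ∫⁻ x, ENNReal.ofReal ((dualOp T μ)^[m] g x) * u x ∂μ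
        = ∫⁻ x, ENNReal.ofReal (g x) * u (T^[m] x) ∂μ := by
  induction m with
  | zero => exact ⟨hg0, fun u _ => rfl⟩
  | succ m ih =>
    obtain ⟨ih0, ihu⟩ := ih
    have hm := measurable_dualOp_iterate (μ := μ) (T := T) hg m
    have hfin : ∫⁻ x, ENNReal.ofReal ((dualOp T μ)^[m] g x) ∂μ ≠ ⊤ := by
      simpa using (ihu 1 measurable_one).trans_ne (by simpa using hgfin)
    have hdual := ofReal_dualOp_ae_eq_dualPos (T := T) ih0 hfin
    rw [iterate_succ_apply']
    refine ⟨?_, fun u hu => ?_⟩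
    · filter_upwards [dualOp_ae_eq_of_nonneg ih0] with x hx
      exact hx ▸ ENNReal.toReal_nonneg
    · rw [lintegral_congr_ae (by filter_upwards [hdual] with x hx; rw [hx]),
        lintegral_dualPos_mul hT hm.ennreal_ofReal hfin hu,
        ihu (fun x => u (T x)) (hu.comp hT.measurable)]
      simp only [iterate_succ_apply']

end DualOperator

section BirkhoffSum

theorem sq_sum_range_le_two_mul_sum_sum_Ico (y : ℕ → ℝ≥0∞) (n : ℕ) :
    (∑ k ∈ range n, y k) ^ 2 ≤ 2 * ∑ j ∈ range n, ∑ k ∈ Ico j n, y j * y k := by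
  have hIco : ∀ j, ∑ k ∈ Ico j n, y j * y k = ∑ k ∈ range n, if j ≤ k then y j * y k else 0 := by
    intro j
    rw [sum_ite, sum_const_zero, add_zero, range_eq_Ico, Ico_filter_le,
      max_eq_right (Nat.zero_le j)]
  calc (∑ k ∈ range n, y k) ^ 2 = ∑ j ∈ range n, ∑ k ∈ range n, y j * y k := by
        rw [sq, sum_mul_sum]
    _ ≤ ∑ j ∈ range n, ∑ k ∈ range n,
          ((if j ≤ k then y j * y k else 0) + if k ≤ j then y k * y j else 0) := by
        gcongr with j _ k _
        rcases le_total j k with h | h <;> simp [h, mul_comm]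
    _ = 2 * ∑ j ∈ range n, ∑ k ∈ Ico j n, y j * y k := by
        simp only [sum_add_distrib, hIco]
        rw [sum_comm (f := fun j k => if k ≤ j then y k * y j else 0), two_mul]

variable {E : Type*} [MeasurableSpace E] {μ : Measure E} {T : E → E}

theorem lintegral_mul_comp_iterate_eq (hT : MeasurePreserving T μ μ) {F : E → ℝ≥0∞}
    (hF : Measurable F) {j k : ℕ} (hjk : j ≤ k) :
    ∫⁻ x, F (T^[j] x) * F (T^[k] x) ∂μ = ∫⁻ x, F x * F (T^[k - j] x) ∂μ := by
  have hk : ∀ x, T^[k] x = T^[k - j] (T^[j] x) := fun x => by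
    rw [← iterate_add_apply, Nat.sub_add_cancel hjk]
  simp_rw [hk]
  exact (hT.iterate j).lintegral_comp (hF.mul (hF.comp (hT.iterate _).measurable))

theorem lintegral_birkhoffSum_sq_le (hT : MeasurePreserving T μ μ) {F : E → ℝ≥0∞}
    (hF : Measurable F) (n : ℕ) :
    ∫⁻ x, birkhoffSum T F n x ^ 2 ∂μ ≤ 2 * n * ∑ m ∈ range n, ∫⁻ x, F x * F (T^[m] x) ∂μ := by
  have hFk : ∀ k, Measurable fun x => F (T^[k] x) := fun k => hF.comp (hT.iterate k).measurable
  calc ∫⁻ x, birkhoffSum T F n x ^ 2 ∂μ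
      ≤ ∫⁻ x, 2 * ∑ j ∈ range n, ∑ k ∈ Ico j n, F (T^[j] x) * F (T^[k] x) ∂μ :=
        lintegral_mono fun x => sq_sum_range_le_two_mul_sum_sum_Ico _ n
    _ = 2 * ∑ j ∈ range n, ∑ m ∈ range (n - j), ∫⁻ x, F x * F (T^[m] x) ∂μ := by
        rw [lintegral_const_mul' _ _ ENNReal.ofNat_ne_top]
        congr 1
        rw [lintegral_finsetSum (f := fun j x => ∑ k ∈ Ico j n, F (T^[j] x) * F (T^[k] x)) _
          fun j _ => Finset.measurable_sum _ fun k _ => (hFk j).mul (hFk k)]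
        refine sum_congr rfl fun j _ => ?_
        rw [lintegral_finsetSum (f := fun k x => F (T^[j] x) * F (T^[k] x)) _
          fun k _ => (hFk j).mul (hFk k), sum_Ico_eq_sum_range]
        refine sum_congr rfl fun m _ => ?_
        rw [lintegral_mul_comp_iterate_eq hT hF (Nat.le_add_right j m), Nat.add_sub_cancel_left]
    _ ≤ 2 * ∑ j ∈ range n, ∑ m ∈ range n, ∫⁻ x, F x * F (T^[m] x) ∂μ := by
        gcongr
        exact Nat.sub_le n _
    _ = 2 * n * ∑ m ∈ range n, ∫⁻ x, F x * F (T^[m] x) ∂μ := by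
        rw [sum_const, card_range, nsmul_eq_mul, mul_assoc]

theorem lintegral_birkhoffSum (hT : MeasurePreserving T μ μ) {F : E → ℝ≥0∞}
    (hF : Measurable F) (n : ℕ) :
    ∫⁻ x, birkhoffSum T F n x ∂μ = n * ∫⁻ x, F x ∂μ := by
  simp_rw [birkhoffSum]
  rw [lintegral_finsetSum (f := fun k x => F (T^[k] x)) _
    fun k _ => hF.comp (hT.iterate k).measurable]
  simp_rw [(hT.iterate _).lintegral_comp hF]
  rw [sum_const, card_range, nsmul_eq_mul]

end BirkhoffSum

section WanderingRate

variable {E : Type*} [MeasurableSpace E] {μ : Measure E} {T : E → E} {A : Set E}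

theorem sq_lintegral_mul_le {f g : E → ℝ≥0∞} (hf : AEMeasurable f μ) (hg : AEMeasurable g μ) :
    (∫⁻ x, f x * g x ∂μ) ^ 2 ≤ (∫⁻ x, f x ^ 2 ∂μ) * ∫⁻ x, g x ^ 2 ∂μ := by
  have hsq : ∀ h : E → ℝ≥0∞, ∫⁻ x, h x ^ (2 : ℝ) ∂μ = ∫⁻ x, h x ^ 2 ∂μ := fun h => by
    simp_rw [← ENNReal.rpow_natCast]; norm_num
  have := ENNReal.lintegral_mul_le_Lp_mul_Lq μ Real.HolderConjugate.two_two hf hg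
  rw [hsq, hsq] at this
  calc (∫⁻ x, f x * g x ∂μ) ^ 2
      ≤ ((∫⁻ x, f x ^ 2 ∂μ) ^ (1 / 2 : ℝ) * (∫⁻ x, g x ^ 2 ∂μ) ^ (1 / 2 : ℝ)) ^ 2 := by
        gcongr; exact this
    _ = (∫⁻ x, f x ^ 2 ∂μ) * ∫⁻ x, g x ^ 2 ∂μ := by
        simp_rw [mul_pow, ← ENNReal.rpow_natCast, ← ENNReal.rpow_mul]; norm_num

theorem measure_le_wanderingRate {n : ℕ} (hn : 1 ≤ n) : μ A ≤ wanderingRate T μ A n :=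
  measure_mono <| Set.subset_biUnion_of_mem (u := fun k => T^[k] ⁻¹' A) (mem_range.2 hn)

theorem wanderingRate_le_measure_firstEntrance_le (hT : MeasurePreserving T μ μ)
    (hA : MeasurableSet A) (n : ℕ) :
    wanderingRate T μ A n ≤ μ {x | firstEntrance T A x ≤ n} := by
  have hW : MeasurableSet (⋃ k ∈ range n, T^[k] ⁻¹' A) :=
    Finset.measurableSet_biUnion _ fun k _ => (hT.iterate k).measurable hA
  rw [wanderingRate, ← hT.measure_preimage hW.nullMeasurableSet]
  refine measure_mono fun x hx => ?_
  simp only [Set.mem_preimage, Set.mem_iUnion, mem_range] at hx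
  obtain ⟨k, hk, hxk⟩ := hx
  have : firstEntrance T A x ≤ (k + 1 : ℕ) :=
    sInf_le ⟨k + 1, rfl, Nat.le_add_left 1 k, by rwa [iterate_succ_apply]⟩
  exact this.trans (by exact_mod_cast hk)

theorem sq_natCast_mul_measure_le_lintegral_birkhoffSum_sq_mul_wanderingRate
    (hT : MeasurePreserving T μ μ) (hA : MeasurableSet A) (n : ℕ) :
    (n * μ A) ^ 2 ≤
      (∫⁻ x, birkhoffSum T (A.indicator (1 : E → ℝ≥0∞)) n x ^ 2 ∂μ) * wanderingRate T μ A n := by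
  set W := ⋃ k ∈ range n, T^[k] ⁻¹' A
  have hW : MeasurableSet W :=
    Finset.measurableSet_biUnion _ fun k _ => (hT.iterate k).measurable hA
  have hsum : ∀ x, birkhoffSum T (A.indicator 1) n x =
      birkhoffSum T (A.indicator 1) n x * W.indicator (1 : E → ℝ≥0∞) x := by
    intro x
    by_cases hx : x ∈ W
    · simp [hx]
    · simp only [hx, not_false_eq_true, Set.indicator_of_notMem, mul_zero]
      refine sum_eq_zero fun k hk => Set.indicator_of_notMem (fun hxk => hx ?_) _
      exact Set.mem_biUnion hk hxk
  have hind : ∫⁻ x, W.indicator 1 x ^ 2 ∂μ = μ W := by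
    rw [← lintegral_indicator_one hW]
    congr 1
    ext x
    by_cases hx : x ∈ W <;> simp [hx]
  have hbirk : Measurable (birkhoffSum T (A.indicator (1 : E → ℝ≥0∞)) n) :=
    Finset.measurable_sum _ fun k _ => (measurable_one.indicator hA).comp (hT.iterate k).measurable
  calc (n * μ A) ^ 2 = (∫⁻ x, birkhoffSum T (A.indicator 1) n x ∂μ) ^ 2 := by
        rw [lintegral_birkhoffSum hT (measurable_one.indicator hA), lintegral_indicator_one hA]
    _ = (∫⁻ x, birkhoffSum T (A.indicator 1) n x * W.indicator 1 x ∂μ) ^ 2 := by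
        rw [lintegral_congr hsum]
    _ ≤ _ := by
        rw [wanderingRate, ← hind]
        exact sq_lintegral_mul_le hbirk.aemeasurable (measurable_one.indicator hW).aemeasurable

end WanderingRate

section UniformAverages

theorem eventually_le_mul_of_tendstoUniformlyOn {ι : Type*} {s : ℕ → ι → ℝ} {a : ℕ → ℝ}
    {L : ℝ} {B : Set ι} (ha : Tendsto a atTop atTop)
    (h : TendstoUniformlyOn (fun n x => (a n)⁻¹ * s n x) (fun _ => L) atTop B) :
    ∀ᶠ n in atTop, ∀ x ∈ B, s n x ≤ (L + 1) * a n := by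
  filter_upwards [ha.eventually_gt_atTop 0, Metric.tendstoUniformlyOn_iff.1 h 1 one_pos]
    with n hpos hclose x hx
  have hlt : (a n)⁻¹ * s n x < L + 1 := by
    have := (abs_sub_lt_iff.1 (hclose x hx)).2
    linarith
  rw [mul_comm]
  exact ((inv_mul_lt_iff₀ hpos).1 hlt).le

variable {E : Type*} [MeasurableSpace E] {μ : Measure E} [SigmaFinite μ] {T : E → E}

theorem exists_lintegral_birkhoffSum_sq_le_of_tendstoUniformlyOn (hT : MeasurePreserving T μ μ)
    {g : E → ℝ} (hg : Measurable g) (hg0 : 0 ≤ g) (hg1 : Integrable g μ) (hg2 : MemLp g 2 μ)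
    {a : ℕ → ℝ} (ha : Tendsto a atTop atTop) {L : ℝ} {B : Set E}
    (hgB : ∀ᵐ x ∂μ, x ∉ B → g x = 0)
    (hunif : TendstoUniformlyOn
      (fun n x => (a n)⁻¹ * ∑ k ∈ Icc 1 n, (dualOp T μ)^[k] g x) (fun _ => L) atTop B) :
    ∃ c : ℝ≥0∞, c ≠ ⊤ ∧ ∀ᶠ n in atTop,
      ∫⁻ x, birkhoffSum T (fun y => ENNReal.ofReal (g y)) n x ^ 2 ∂μ
        ≤ c * n * ENNReal.ofReal (a n) := by
  set F : E → ℝ≥0∞ := fun y => ENNReal.ofReal (g y)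
  set J := ∫⁻ x, F x ∂μ
  set Q := ∫⁻ x, F x ^ 2 ∂μ
  have hF : Measurable F := hg.ennreal_ofReal
  have hJ : J ≠ ⊤ := hg1.lintegral_lt_top.ne
  have hQ : Q ≠ ⊤ := by
    refine ((hg2.integrable_sq).lintegral_lt_top.trans_eq' ?_).ne
    exact lintegral_congr fun x => ENNReal.ofReal_pow (hg0 x) 2
  have hdual := ae_nonneg_dualOp_iterate_and_lintegral_mul hT hg (ae_of_all _ hg0) hJ
  have hcorr : ∀ n, ∑ m ∈ Icc 1 n, ∫⁻ x, F x * F (T^[m] x) ∂μ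
      = ∫⁻ x, ENNReal.ofReal (∑ m ∈ Icc 1 n, (dualOp T μ)^[m] g x) * F x ∂μ := by
    intro n
    have hnn : ∀ᵐ x ∂μ, ∀ m, 0 ≤ (dualOp T μ)^[m] g x := ae_all_iff.2 fun m => (hdual m).1
    rw [lintegral_congr_ae (hnn.mono fun x hx => by
        rw [ENNReal.ofReal_sum_of_nonneg fun m _ => hx m, sum_mul]),
      lintegral_finsetSum (f := fun m x => ENNReal.ofReal ((dualOp T μ)^[m] g x) * F x) _
        fun m _ => (measurable_dualOp_iterate hg m).ennreal_ofReal.mul hF]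
    exact sum_congr rfl fun m _ => ((hdual m).2 F hF).symm
  have htail : ∀ᶠ n in atTop,
      ∑ m ∈ Icc 1 n, ∫⁻ x, F x * F (T^[m] x) ∂μ ≤ ENNReal.ofReal ((L + 1) * a n) * J := by
    filter_upwards [eventually_le_mul_of_tendstoUniformlyOn ha hunif] with n hn
    rw [hcorr, ← lintegral_const_mul _ hF]
    refine lintegral_mono_ae (hgB.mono fun x hx => ?_)
    by_cases hxB : x ∈ B
    · exact mul_le_mul_left (ENNReal.ofReal_le_ofReal (hn x hxB)) _
    · simp [F, hx hxB]
  have hhead : ∀ n, ∑ m ∈ range n, ∫⁻ x, F x * F (T^[m] x) ∂μ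
      ≤ Q + ∑ m ∈ Icc 1 n, ∫⁻ x, F x * F (T^[m] x) ∂μ := by
    intro n
    calc ∑ m ∈ range n, ∫⁻ x, F x * F (T^[m] x) ∂μ
        ≤ ∑ m ∈ range (n + 1), ∫⁻ x, F x * F (T^[m] x) ∂μ :=
          sum_le_sum_of_subset (range_subset_range.2 n.le_succ)
      _ = Q + ∑ m ∈ Icc 1 n, ∫⁻ x, F x * F (T^[m] x) ∂μ := by
          rw [sum_range_succ', ← Ico_add_one_right_eq_Icc, sum_Ico_eq_sum_range,
            Nat.add_sub_cancel, add_comm]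
          simp [Q, F, sq, add_comm 1]
  refine ⟨2 * (Q + ENNReal.ofReal (L + 1) * J), by finiteness, ?_⟩
  filter_upwards [htail, ha.eventually_ge_atTop 1] with n hn ha1
  have ha1' : 1 ≤ ENNReal.ofReal (a n) := ENNReal.one_le_ofReal.2 ha1
  calc ∫⁻ x, birkhoffSum T F n x ^ 2 ∂μ
      ≤ 2 * n * ∑ m ∈ range n, ∫⁻ x, F x * F (T^[m] x) ∂μ := lintegral_birkhoffSum_sq_le hT hF n
    _ ≤ 2 * n * (Q * ENNReal.ofReal (a n)
          + ENNReal.ofReal (L + 1) * ENNReal.ofReal (a n) * J) := by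
        rw [← ENNReal.ofReal_mul' (by linarith)]
        gcongr
        exact (hhead n).trans (add_le_add (le_mul_of_one_le_right' ha1') hn)
    _ = 2 * (Q + ENNReal.ofReal (L + 1) * J) * n * ENNReal.ofReal (a n) := by ring

end UniformAverages

section DarlingKac

variable {E : Type*} [MeasurableSpace E] {μ : Measure E} {T : E → E} {a : ℕ → ℝ} {A : Set E}

theorem ae_eq_zero_of_notMem_of_subset_of_measure_eq {g : E → ℝ} (hsupp : ∀ x ∉ A, g x = 0)
    {B : Set E} (hBA : B ⊆ A) (hB : MeasurableSet B) (hμ : μ B = μ A) (hA : μ A ≠ ⊤) :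
    ∀ᵐ x ∂μ, x ∉ B → g x = 0 := by
  filter_upwards [ae_eq_of_subset_of_measure_ge hBA hμ.ge hB.nullMeasurableSet hA]
    with x hx hxB
  exact hsupp x (hx.to_iff.not.1 hxB)

variable [SigmaFinite μ]

theorem UniformSet.exists_lintegral_birkhoffSum_sq_le {g : E → ℝ} (huni : UniformSet T μ a A g)
    (hT : MeasurePreserving T μ μ) (hA : μ A ≠ ⊤) (hg : Measurable g) (hg0 : 0 ≤ g)
    (hg1 : Integrable g μ) (hg2 : MemLp g 2 μ) (hsupp : ∀ x ∉ A, g x = 0)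
    (ha : Tendsto a atTop atTop) :
    ∃ c : ℝ≥0∞, c ≠ ⊤ ∧ ∀ᶠ n in atTop,
      ∫⁻ x, birkhoffSum T (fun y => ENNReal.ofReal (g y)) n x ^ 2 ∂μ
        ≤ c * n * ENNReal.ofReal (a n) :=
  let ⟨_, hBA, hB, hμ, hunif⟩ := huni
  exists_lintegral_birkhoffSum_sq_le_of_tendstoUniformlyOn hT hg hg0 hg1 hg2 ha
    (ae_eq_zero_of_notMem_of_subset_of_measure_eq hsupp hBA hB hμ hA) hunif

theorem DarlingKacSet.exists_natCast_mul_sq_le_wanderingRate (hDK : DarlingKacSet T μ a A)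
    (hT : MeasurePreserving T μ μ) :
    ∃ c : ℝ≥0∞, c ≠ ⊤ ∧ ∀ᶠ n : ℕ in atTop,
      n * μ A ^ 2 ≤ c * ENNReal.ofReal (a n) * wanderingRate T μ A n := by
  obtain ⟨hA, -, hAfin, ha, B, hBA, hB, hμ, hunif⟩ := hDK
  have hind : (fun y => ENNReal.ofReal (A.indicator 1 y)) = A.indicator (1 : E → ℝ≥0∞) := by
    ext y
    by_cases hy : y ∈ A <;> simp [hy]
  obtain ⟨c, hc, hmoment⟩ := exists_lintegral_birkhoffSum_sq_le_of_tendstoUniformlyOn hT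
    (measurable_one.indicator hA) (Set.indicator_nonneg fun _ _ => zero_le_one)
    ((integrable_indicator_iff hA).2 (integrableOn_const hAfin.ne))
    (memLp_indicator_const 2 hA 1 (Or.inr hAfin.ne)) ha
    (ae_eq_zero_of_notMem_of_subset_of_measure_eq (fun x hx => Set.indicator_of_notMem hx _)
      hBA hB hμ hAfin.ne) hunif
  refine ⟨c, hc, ?_⟩
  filter_upwards [hmoment, eventually_ge_atTop 1] with n hn hn1
  rw [hind] at hn
  have hn0 : (n : ℝ≥0∞) ≠ 0 := by exact_mod_cast (Nat.one_le_iff_ne_zero.1 hn1)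
  refine (ENNReal.mul_le_mul_iff_right hn0 (ENNReal.natCast_ne_top n)).1 ?_
  calc (n : ℝ≥0∞) * (n * μ A ^ 2) = (n * μ A) ^ 2 := by ring
    _ ≤ _ := sq_natCast_mul_measure_le_lintegral_birkhoffSum_sq_mul_wanderingRate hT hA n
    _ ≤ c * n * ENNReal.ofReal (a n) * wanderingRate T μ A n := by gcongr
    _ = n * (c * ENNReal.ofReal (a n) * wanderingRate T μ A n) := by ring

end DarlingKac

section ErgodicSums

theorem ergSum_eq_birkhoffSum {E : Type*} (T : E → E) (f : E → ℝ) (n : ℕ) (x : E) :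
    ergSum T f n x = birkhoffSum T f n (T x) := by
  rw [ergSum, birkhoffSum, ← Ico_add_one_right_eq_Icc, sum_Ico_eq_sum_range, Nat.add_sub_cancel]
  simp only [add_comm 1, iterate_succ_apply]

variable {E : Type*} [MeasurableSpace E] {μ : Measure E} {T : E → E} {f : E → ℝ}

theorem lintegral_ofReal_ergSum_sq_le (hT : MeasurePreserving T μ μ) (hf : Measurable f)
    (n : ℕ) :
    ∫⁻ x, ENNReal.ofReal (ergSum T f n x ^ 2) ∂μ
      ≤ ∫⁻ x, birkhoffSum T (fun y => ENNReal.ofReal |f y|) n x ^ 2 ∂μ := by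
  have hpt : ∀ y, ENNReal.ofReal (birkhoffSum T f n y ^ 2)
      ≤ birkhoffSum T (fun y => ENNReal.ofReal |f y|) n y ^ 2 := fun y => by
    rw [birkhoffSum, birkhoffSum, ← ENNReal.ofReal_sum_of_nonneg fun k _ => abs_nonneg _,
      ← ENNReal.ofReal_pow (sum_nonneg fun k _ => abs_nonneg _), ← sq_abs]
    gcongr
    exact abs_sum_le_sum_abs _ _
  have hbirk : Measurable (birkhoffSum T (fun y => ENNReal.ofReal |f y|) n) :=
    Finset.measurable_sum _ fun k _ => hf.abs.ennreal_ofReal.comp (hT.iterate k).measurable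
  calc ∫⁻ x, ENNReal.ofReal (ergSum T f n x ^ 2) ∂μ
      ≤ ∫⁻ x, birkhoffSum T (fun y => ENNReal.ofReal |f y|) n (T x) ^ 2 ∂μ :=
        lintegral_mono fun x => ergSum_eq_birkhoffSum T f n x ▸ hpt (T x)
    _ = _ := hT.lintegral_comp (hbirk.pow_const 2)

theorem lintegral_ofReal_ergSum_sq_ne_top (hT : MeasurePreserving T μ μ) (hf : MemLp f 2 μ)
    (n : ℕ) : ∫⁻ x, ENNReal.ofReal (ergSum T f n x ^ 2) ∂μ ≠ ⊤ :=
  ((memLp_finsetSum _ fun k _ => hf.comp_measurePreserving (hT.iterate k)).integrable_sq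
    |>.lintegral_lt_top).ne

end ErgodicSums

theorem exists_forall_le_mul_of_eventually_le_mul {u v : ℕ → ℝ≥0∞} {c : ℝ≥0∞} (hc : c ≠ ⊤)
    (h : ∀ᶠ n in atTop, u n ≤ c * v n) (hu : ∀ n, 1 ≤ n → u n ≠ ⊤)
    (hv : ∀ n, 1 ≤ n → v n ≠ 0) :
    ∃ C : ℝ≥0∞, C ≠ ⊤ ∧ ∀ n, 1 ≤ n → u n ≤ C * v n := by
  obtain ⟨N, hN⟩ := eventually_atTop.1 h
  have hfin : ∀ n ∈ Icc 1 N, u n / v n ≠ ⊤ := fun n hn =>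
    ENNReal.div_ne_top (hu n (mem_Icc.1 hn).1) (hv n (mem_Icc.1 hn).1)
  -- the `1` keeps `C ≠ 0`, which handles the case `v n = ⊤`
  refine ⟨max (max c 1) ((Icc 1 N).sup fun n => u n / v n), ?_, fun n hn => ?_⟩
  · exact max_ne_top (max_ne_top hc ENNReal.one_ne_top)
      ((Finset.sup_lt_iff ENNReal.zero_lt_top).2 fun n hn => (hfin n hn).lt_top).ne
  rcases le_or_gt N n with hNn | hnN
  · exact (hN n hNn).trans (by gcongr; exact le_max_of_le_left (le_max_left _ _))
  by_cases hvt : v n = ⊤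
  · rw [hvt, ENNReal.mul_top (ne_of_gt (lt_max_of_lt_left (lt_max_of_lt_right one_pos)))]
    exact le_top
  calc u n = u n / v n * v n := (ENNReal.div_mul_cancel (hv n hn) hvt).symm
    _ ≤ _ := by
      gcongr
      exact le_max_of_le_right (Finset.le_sup (f := fun n => u n / v n)
        (mem_Icc.2 ⟨hn, hnN.le⟩))

theorem ergodic_sums_second_moment_bound_general
    {E : Type*} [MeasurableSpace E] (μ : Measure E) [SigmaFinite μ]
    (T : E → E) (hT : MeasurePreserving T μ μ)
    (a : ℕ → ℝ) (A : Set E) (hDK : DarlingKacSet T μ a A)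
    (β : ℝ) (hreg : RegularlyVarying a β)
    (f : E → ℝ) (hfmeas : Measurable f) (hf2 : MemLp f 2 μ)
    (hsupp : ∀ x ∉ A, f x = 0)
    (huni : UniformSet T μ a A (fun x => |f x|)) :
    ∃ C : ℝ≥0∞, C ≠ ⊤ ∧ ∀ n : ℕ, 1 ≤ n →
      ∫⁻ x, ENNReal.ofReal (ergSum T f n x ^ 2) ∂μ
        ≤ C * ENNReal.ofReal (a n ^ 2) * μ {x | firstEntrance T A x ≤ (n : ℕ∞)} := by
  obtain ⟨cA, hcA, hwander⟩ := hDK.exists_natCast_mul_sq_le_wanderingRate hT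
  obtain ⟨hA, hApos, hAfin, ha, -⟩ := hDK
  have : IsFiniteMeasure (μ.restrict A) := isFiniteMeasure_restrict.2 hAfin.ne
  have hf1 : Integrable f μ :=
    IntegrableOn.integrable_of_forall_notMem_eq_zero ((hf2.restrict A).integrable one_le_two) hsupp
  obtain ⟨cf, hcf, hmoment⟩ := huni.exists_lintegral_birkhoffSum_sq_le hT hAfin.ne hfmeas.abs
    (fun x => abs_nonneg _) hf1.abs hf2.abs (fun x hx => by simp [hsupp x hx]) ha
  have hφ : ∀ n : ℕ, 1 ≤ n → μ A ≤ μ {x | firstEntrance T A x ≤ (n : ℕ∞)} := fun n hn =>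
    (measure_le_wanderingRate hn).trans (wanderingRate_le_measure_firstEntrance_le hT hA n)
  simp_rw [mul_assoc _ (ENNReal.ofReal _)]
  refine exists_forall_le_mul_of_eventually_le_mul (c := cf * cA / μ A ^ 2) (by finiteness)
    ?_ (fun n _ => lintegral_ofReal_ergSum_sq_ne_top hT hf2 n) fun n hn =>
      mul_ne_zero (by simpa using (hreg.1 n hn).ne') (hApos.trans_le (hφ n hn)).ne'
  filter_upwards [hwander, hmoment, ha.eventually_ge_atTop 0] with n hw hm ha0
  calc ∫⁻ x, ENNReal.ofReal (ergSum T f n x ^ 2) ∂μ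
      ≤ cf * n * ENNReal.ofReal (a n) := (lintegral_ofReal_ergSum_sq_le hT hfmeas n).trans hm
    _ ≤ cf * (cA * ENNReal.ofReal (a n) * wanderingRate T μ A n / μ A ^ 2)
          * ENNReal.ofReal (a n) := by
        gcongr
        exact (ENNReal.le_div_iff_mul_le (by simp [hApos.ne']) (by simp [hAfin.ne])).2 hw
    _ = cf * cA / μ A ^ 2 * (ENNReal.ofReal (a n ^ 2) * wanderingRate T μ A n) := by
        rw [ENNReal.ofReal_pow ha0, div_eq_mul_inv, div_eq_mul_inv]; ring
    _ ≤ _ := by gcongr; exact wanderingRate_le_measure_firstEntrance_le hT hA n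

/-- Uniform second-moment bound: if `A` is a Darling–Kac set whose normalizing
sequence is regularly varying with exponent `β ∈ (0,1)`, `f ∈ L²(μ)` vanishes
outside `A`, and `A` is a uniform set for `|f|`, then
`sup_{n ≥ 1} (a_n² μ(φ ≤ n))⁻¹ ∫ S_n(f)² dμ < ∞`. -/
theorem ergodic_sums_second_moment_bound
    {E : Type*} [MeasurableSpace E] (μ : Measure E) [SigmaFinite μ]
    (hInf : μ Set.univ = ⊤)
    (T : E → E) (hT : MeasurePreserving T μ μ) (hcons : Conservative T μ)
    (herg : Ergodic T μ)
    (a : ℕ → ℝ) (A : Set E) (hDK : DarlingKacSet T μ a A)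
    (β : ℝ) (hβ0 : 0 < β) (hβ1 : β < 1) (hreg : RegularlyVarying a β)
    (f : E → ℝ) (hfmeas : Measurable f) (hf2 : MemLp f 2 μ)
    (hsupp : ∀ x ∉ A, f x = 0)
    (huni : UniformSet T μ a A (fun x => |f x|)) :
    ∃ C : ℝ≥0∞, C ≠ ⊤ ∧ ∀ n : ℕ, 1 ≤ n →
      ∫⁻ x, ENNReal.ofReal (ergSum T f n x ^ 2) ∂μ
        ≤ C * ENNReal.ofReal (a n ^ 2) * μ {x | firstEntrance T A x ≤ (n : ℕ∞)} :=
  ergodic_sums_second_moment_bound_general μ T hT a A hDK β hreg f hfmeas hf2 hsupp huni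
end

section
/- For every β∈(0,1) and every y>0, ∫_0^1 ( t/(1−t) )^β (t+y)^{−1} dt = (π / sin(βπ)) ( 1 − ( y/(1+y) )^β ). -/
/-!
With `s = t/(1-t)` and `a = y/(1+y)`, the integral becomes
`∫_0^∞ s^(β-1)/(1+s) ds - a ∫_0^∞ s^(β-1)/(a+s) ds` by partial fractions. Scaling `s ↦ a s`
shows that the second integral is `a^(β-1)` times the first, and the same substitution
`s = t/(1-t)` turns the first into the Beta integral `B(β, 1-β) = Γ(β) Γ(1-β) = π / sin(πβ)`.
-/

open MeasureTheory Set

theorem integral_Ioo_rpow_mul_one_sub_rpow {u v : ℝ} (hu : 0 < u) (hv : 0 < v) :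
    ∫ t in Ioo (0 : ℝ) 1, t ^ (u - 1) * (1 - t) ^ (v - 1)
      = Real.Gamma u * Real.Gamma v / Real.Gamma (u + v) := by
  apply Complex.ofReal_injective
  push_cast
  rw [← Complex.Gamma_ofReal, ← Complex.Gamma_ofReal, ← Complex.Gamma_ofReal, Complex.ofReal_add,
    ← Complex.betaIntegral_eq_Gamma_mul_div _ _ (by simpa) (by simpa), Complex.betaIntegral,
    intervalIntegral.integral_of_le zero_le_one, integral_Ioc_eq_integral_Ioo,
    ← integral_complex_ofReal]
  refine setIntegral_congr_fun measurableSet_Ioo fun t ⟨ht0, ht1⟩ => ?_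
  rw [Complex.ofReal_mul, Complex.ofReal_cpow ht0.le, Complex.ofReal_cpow (by linarith)]
  push_cast
  rfl

theorem integral_Ioo_rpow_mul_one_sub_rpow_neg {β : ℝ} (hβ0 : 0 < β) (hβ1 : β < 1) :
    ∫ t in Ioo (0 : ℝ) 1, t ^ (β - 1) * (1 - t) ^ (-β) = Real.pi / Real.sin (Real.pi * β) := by
  have := integral_Ioo_rpow_mul_one_sub_rpow hβ0 (sub_pos.2 hβ1)
  rwa [sub_sub_cancel_left, add_sub_cancel, Real.Gamma_one, div_one,
    Real.Gamma_mul_Gamma_one_sub] at this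

theorem hasDerivAt_div_one_sub {t : ℝ} (ht : t ≠ 1) :
    HasDerivAt (fun t : ℝ => t / (1 - t)) ((1 - t) ^ 2)⁻¹ t := by
  have h1t : 1 - t ≠ 0 := sub_ne_zero.2 ht.symm
  refine ((hasDerivAt_id' t).div ((hasDerivAt_id' t).const_sub 1) h1t).congr_deriv ?_
  field_simp
  ring

theorem injOn_div_one_sub : InjOn (fun t : ℝ => t / (1 - t)) (Iio 1) := by
  intro a ha b hb hab
  have ha1 : 1 - a ≠ 0 := by linarith [show a < 1 from ha]
  have hb1 : 1 - b ≠ 0 := by linarith [show b < 1 from hb]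
  field_simp at hab
  linarith

theorem image_div_one_sub_Ioo : (fun t : ℝ => t / (1 - t)) '' Ioo 0 1 = Ioi 0 := by
  refine Subset.antisymm (fun _ ⟨t, ⟨ht0, ht1⟩, hs⟩ => hs ▸ div_pos ht0 (sub_pos.2 ht1))
    fun s (hs : 0 < s) => ⟨s / (1 + s), ⟨by positivity, ?_⟩, ?_⟩
  · rw [div_lt_one (by positivity)]
    linarith
  · have : 1 + s ≠ 0 := by positivity
    simp only
    field_simp
    ring

theorem integral_Ioi_eq_integral_Ioo_div_one_sub (g : ℝ → ℝ) :
    ∫ s in Ioi 0, g s = ∫ t in Ioo (0 : ℝ) 1, ((1 - t) ^ 2)⁻¹ * g (t / (1 - t)) := by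
  rw [← image_div_one_sub_Ioo, integral_image_eq_integral_abs_deriv_smul measurableSet_Ioo
    (fun t ht => (hasDerivAt_div_one_sub ht.2.ne).hasDerivWithinAt)
    (injOn_div_one_sub.mono fun _ ht => ht.2) g]
  refine setIntegral_congr_fun measurableSet_Ioo fun t _ => ?_
  rw [smul_eq_mul, abs_of_nonneg (by positivity)]

theorem integrableOn_Ioi_rpow_div_add {β c : ℝ} (hβ0 : 0 < β) (hβ1 : β < 1) (hc : 0 < c) :
    IntegrableOn (fun s : ℝ => s ^ (β - 1) / (c + s)) (Ioi 0) := by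
  have hcont : ContinuousOn (fun s : ℝ => s ^ (β - 1) / (c + s)) (Ioi 0) :=
    (continuousOn_id.rpow_const fun s hs => Or.inl (ne_of_gt hs)).div (by fun_prop)
      fun s (hs : 0 < s) => by positivity
  rw [← Ioc_union_Ioi_eq_Ioi zero_le_one]
  refine IntegrableOn.union ?_ ?_
  · have hbound : IntegrableOn (fun s : ℝ => c⁻¹ * s ^ (β - 1)) (Ioc 0 1) :=
      ((intervalIntegral.intervalIntegrable_rpow' (by linarith)).1).const_mul _
    refine hbound.mono' ((hcont.mono Ioc_subset_Ioi_self).aestronglyMeasurable measurableSet_Ioc)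
      (ae_restrict_of_forall_mem measurableSet_Ioc fun s ⟨hs0, _⟩ => ?_)
    rw [Real.norm_of_nonneg (by positivity), div_eq_inv_mul]
    gcongr
    linarith
  · refine (integrableOn_Ioi_rpow_of_lt (by linarith : β - 2 < -1) one_pos).mono'
      ((hcont.mono (Ioi_subset_Ioi zero_le_one)).aestronglyMeasurable measurableSet_Ioi)
      (ae_restrict_of_forall_mem measurableSet_Ioi fun s (hs : 1 < s) => ?_)
    have hs0 : 0 < s := one_pos.trans hs
    rw [Real.norm_of_nonneg (by positivity), show β - 2 = (β - 1) - 1 by ring,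
      Real.rpow_sub_one hs0.ne' (β - 1)]
    gcongr
    linarith

theorem integral_Ioi_rpow_div_add_eq_mul (β : ℝ) {c : ℝ} (hc : 0 < c) :
    ∫ s in Ioi 0, s ^ (β - 1) / (c + s) = c ^ (β - 1) * ∫ s in Ioi 0, s ^ (β - 1) / (1 + s) := by
  have := integral_comp_mul_left_Ioi (fun s : ℝ => s ^ (β - 1) / (c + s)) 0 hc
  rw [mul_zero, smul_eq_mul, eq_inv_mul_iff_mul_eq₀ hc.ne'] at this
  rw [← this, ← integral_const_mul, ← integral_const_mul]
  refine setIntegral_congr_fun measurableSet_Ioi fun s (hs : 0 < s) => ?_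
  rw [Real.mul_rpow hc.le hs.le, show c + c * s = c * (1 + s) by ring, Real.rpow_sub_one hc.ne']
  field_simp

theorem integral_Ioi_rpow_div_one_add {β : ℝ} (hβ0 : 0 < β) (hβ1 : β < 1) :
    ∫ s in Ioi 0, s ^ (β - 1) / (1 + s) = Real.pi / Real.sin (Real.pi * β) := by
  rw [integral_Ioi_eq_integral_Ioo_div_one_sub, ← integral_Ioo_rpow_mul_one_sub_rpow_neg hβ0 hβ1]
  refine setIntegral_congr_fun measurableSet_Ioo fun t ⟨ht0, ht1⟩ => ?_
  have h1t : 0 < 1 - t := sub_pos.2 ht1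
  have hpow : (1 - t) ^ (-β) = ((1 - t) ^ (β - 1) * (1 - t))⁻¹ := by
    rw [← Real.rpow_add_one h1t.ne', sub_add_cancel, Real.rpow_neg h1t.le]
  rw [Real.div_rpow ht0.le h1t.le, hpow]
  field_simp
  ring

-- Partial fractions in `s = t/(1-t)`, with `a = y/(1+y)`.
theorem rpow_div_one_sub_div_add_eq {β y t : ℝ} (hy : 0 < y) (ht : t ∈ Ioo (0 : ℝ) 1) :
    (t / (1 - t)) ^ β / (t + y) = ((1 - t) ^ 2)⁻¹ * ((t / (1 - t)) ^ (β - 1) / (1 + t / (1 - t))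
      - y / (1 + y) * ((t / (1 - t)) ^ (β - 1) / (y / (1 + y) + t / (1 - t)))) := by
  obtain ⟨ht0, ht1⟩ := ht
  have h1t : 0 < 1 - t := sub_pos.2 ht1
  have hs : 0 < t / (1 - t) := div_pos ht0 h1t
  rw [Real.rpow_sub_one hs.ne' β]
  field_simp
  ring

/-- For every `β ∈ (0,1)` and `y > 0`,
`∫_0^1 (t/(1-t))^β (t+y)⁻¹ dt = (π / sin(βπ)) (1 - (y/(1+y))^β)`. -/
theorem integral_rpow_div_add_eq (β y : ℝ) (hβ0 : 0 < β) (hβ1 : β < 1) (hy : 0 < y) :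
    ∫ t in Set.Ioo (0 : ℝ) 1, (t / (1 - t)) ^ β / (t + y)
      = Real.pi / Real.sin (β * Real.pi) * (1 - (y / (1 + y)) ^ β) := by
  set a := y / (1 + y)
  have ha : 0 < a := by positivity
  calc ∫ t in Ioo (0 : ℝ) 1, (t / (1 - t)) ^ β / (t + y)
      = ∫ s in Ioi 0, (s ^ (β - 1) / (1 + s) - a * (s ^ (β - 1) / (a + s))) := by
        rw [integral_Ioi_eq_integral_Ioo_div_one_sub]
        exact setIntegral_congr_fun measurableSet_Ioo fun t ht => rpow_div_one_sub_div_add_eq hy ht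
    _ = (1 - a * a ^ (β - 1)) * ∫ s in Ioi 0, s ^ (β - 1) / (1 + s) := by
        rw [integral_sub (integrableOn_Ioi_rpow_div_add hβ0 hβ1 one_pos)
          ((integrableOn_Ioi_rpow_div_add hβ0 hβ1 ha).const_mul a), integral_const_mul,
          integral_Ioi_rpow_div_add_eq_mul β ha]
        ring
    _ = Real.pi / Real.sin (β * Real.pi) * (1 - a ^ β) := by
        rw [integral_Ioi_rpow_div_one_add hβ0 hβ1, mul_comm Real.pi β,
          ← Real.rpow_one_add' ha.le (by simpa using hβ0.ne'), add_sub_cancel, mul_comm]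
end
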